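/- arXiv:1807.08988 — 4 statements merged into one kernel-verified Lean document; each statement's English description precedes it below -/
import Mathlib

section
/- Let 0 < s_1 < s_2 < … < s_n be real numbers, let K ≥ 1, and for 1 ≤ i < j ≤ n and 1 ≤ k < ℓ ≤ n with i ≤ k define b_{i,j,k,ℓ} = 0 if j ≤ k; b_{i,j,k,ℓ} = (s_j − s_k)²/((s_j − s_i)(s_ℓ − s_k)) if k ≤ j ≤ ℓ; and b_{i,j,k,ℓ} = (s_ℓ − s_k)/(s_j − s_i) if k ≤ ℓ ≤ j; extended symmetrically by b_{i,j,k,ℓ} = b_{k,ℓ,i,j}. Then for any k, ℓ ∈ {1,…,K} with ℓ ≤ k and any i with 1 ≤ i ≤ n − k, one has ∑_{j=1}^{n-ℓ} b_{i,i+k,j,j+ℓ} ≥ 1. -/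
open Finset

/-- The limiting squared covariances `b_{i,j,k,ℓ}` of the normalized increments of the
Ornstein–Uhlenbeck process, for observation points `s`. For `i ≤ k`:
`b = 0` if `j ≤ k`; `b = (s j - s k)²/((s j - s i)(s ℓ - s k))` if `k ≤ j ≤ ℓ`;
`b = (s ℓ - s k)/(s j - s i)` if `k ≤ ℓ ≤ j`; extended symmetrically by
`b_{i,j,k,ℓ} = b_{k,ℓ,i,j}`. -/
noncomputable def bCoef (s : ℕ → ℝ) (i j k l : ℕ) : ℝ :=
  if i ≤ k then
    (if j ≤ k then 0
     else if j ≤ l then (s j - s k) ^ 2 / ((s j - s i) * (s l - s k))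
     else (s l - s k) / (s j - s i))
  else
    (if l ≤ i then 0
     else if l ≤ j then (s l - s i) ^ 2 / ((s l - s k) * (s j - s i))
     else (s j - s i) / (s l - s k))

/-- For ordered points `0 < s 1 < … < s n`, gaps `1 ≤ ℓ ≤ k ≤ K` and
`1 ≤ i ≤ n - k`, one has `∑_{j=1}^{n-ℓ} b_{i,i+k,j,j+ℓ} ≥ 1`. -/
theorem bCoef_row_sum_ge_one (n K : ℕ) (s : ℕ → ℝ) (hs0 : 0 < s 1)
    (hmono : ∀ i, 1 ≤ i → i < n → s i < s (i + 1))
    (hK : 1 ≤ K) (k l : ℕ) (hk1 : 1 ≤ k) (hkK : k ≤ K) (hl1 : 1 ≤ l) (hlK : l ≤ K)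
    (hlk : l ≤ k) (i : ℕ) (hi1 : 1 ≤ i) (hik : i + k ≤ n) :
    1 ≤ ∑ j ∈ Finset.Icc 1 (n - l), bCoef s i (i + k) j (j + l) := by
  have sstrict : ∀ b a : ℕ, 1 ≤ a → a < b → b ≤ n → s a < s b := by
    intro b
    induction b with
    | zero => intro a _ h _; omega
    | succ m ih =>
      intro a ha hab hbn
      rcases Nat.lt_or_ge a m with h | h
      · exact lt_trans (ih a ha h (by omega)) (hmono m (by omega) (by omega))
      · have : a = m := by omega
        subst this; exact hmono a ha (by omega)
  have smono : ∀ a b : ℕ, 1 ≤ a → a ≤ b → b ≤ n → s a ≤ s b := by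
    intro a b ha hab hbn
    rcases eq_or_lt_of_le hab with h | h
    · subst h; exact le_refl _
    · exact le_of_lt (sstrict b a ha h hbn)
  have hD : 0 < s (i + k) - s i := by
    have := sstrict (i + k) i hi1 (by omega) hik
    linarith
  -- nonnegativity of all terms
  have hnn : ∀ j ∈ Finset.Icc 1 (n - l), 0 ≤ bCoef s i (i + k) j (j + l) := by
    intro j hj
    simp only [Finset.mem_Icc] at hj
    have hj1 : 1 ≤ j := hj.1
    have hjl : j + l ≤ n := by omega
    have hg : 0 < s (j + l) - s j := by
      have := sstrict (j + l) j hj1 (by omega) hjl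
      linarith
    unfold bCoef
    split_ifs with h1 h2 h3 h4 h5
    · exact le_refl _
    · positivity
    · positivity
    · exact le_refl _
    · positivity
    · positivity
  -- the subset of relevant terms
  have hsub : Finset.Icc i (i + k - l) ⊆ Finset.Icc 1 (n - l) := by
    intro j hj
    simp only [Finset.mem_Icc] at *
    omega
  -- value of terms on the subset
  have hterm : ∀ j ∈ Finset.Icc i (i + k - l),
      bCoef s i (i + k) j (j + l) = (s (j + l) - s j) / (s (i + k) - s i) := by
    intro j hj
    simp only [Finset.mem_Icc] at hj
    unfold bCoef
    have hij : i ≤ j := hj.1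
    have hjk : ¬ (i + k ≤ j) := by omega
    rw [if_pos hij, if_neg hjk]
    by_cases h2 : i + k ≤ j + l
    · have heq : j + l = i + k := by omega
      rw [if_pos h2, heq]
      have hg : 0 < s (i + k) - s j := by
        have := sstrict (i + k) j (by omega) (by omega) hik
        linarith
      field_simp
    · rw [if_neg h2]
  -- covering lower bound
  have hcov : ∀ m : ℕ, m ≤ k - l →
      s (i + m + l) - s i ≤ ∑ j ∈ Finset.Icc i (i + m), (s (j + l) - s j) := by
    intro m
    induction m with
    | zero =>
      intro _
      simp
    | succ m ih =>
      intro hm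
      have hm' : m ≤ k - l := by omega
      rw [show i + (m + 1) = (i + m) + 1 by ring,
        Finset.sum_Icc_succ_top (by omega : i ≤ i + m + 1)]
      have h1 : s (i + (m + 1)) ≤ s (i + m + l) := by
        apply smono <;> omega
      have := ih hm'
      have : s (i + m + 1 + l) - s i ≤
          (∑ j ∈ Finset.Icc i (i + m), (s (j + l) - s j)) + (s (i + m + 1 + l) - s (i + m + 1)) := by
        have : s (i + (m + 1)) = s (i + m + 1) := by ring_nf
        linarith
      linarith [this]
  have hcovk := hcov (k - l) (le_refl _)
  have hikl : i + (k - l) + l = i + k := by omega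
  have hikl2 : i + (k - l) = i + k - l := by omega
  rw [hikl, hikl2] at hcovk
  calc (1 : ℝ) ≤ ∑ j ∈ Finset.Icc i (i + k - l), bCoef s i (i + k) j (j + l) := by
        rw [Finset.sum_congr rfl hterm, ← Finset.sum_div]
        rw [le_div_iff₀ hD, one_mul]
        exact hcovk
    _ ≤ ∑ j ∈ Finset.Icc 1 (n - l), bCoef s i (i + k) j (j + l) :=
        Finset.sum_le_sum_of_subset_of_nonneg hsub (fun j hj _ => hnn j hj)
end

section
/- Let K ≥ 1, let w_1, …, w_K ≥ 0 with not all zero, and let (s_i^{(n)})_{1 ≤ i ≤ n} be triangular arrays of strictly increasing points in [0,1]. With b_{i,j,k,ℓ} as in the previous definition, define A_n = (2/n) ∑_{i=1}^{n-1} ∑_{j=i+1}^{min(n,i+K)} ∑_{k=1}^{n-1} ∑_{ℓ=k+1}^{min(n,k+K)} w_{j-i} w_{ℓ-k} b_{i,j,k,ℓ}. Then lim inf_{n→∞} A_n ≥ 2 (∑_{k=1}^K w_k)². -/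
open Finset Filter

/-!
Write `g m = s (m + 1) - s m` for the gaps and `1_p` for the indicator of the gap indices
`m ∈ [i, j)` of a pair `p = (i, j)`. Then `b_{pq}` is the squared `g`-weighted overlap of `1_p`
and `1_q`, divided by the two lengths `s j - s i` and `s l - s k`. So `∑ w_p w_q b_{pq}` is the
squared Hilbert–Schmidt norm, for the weight `g ⊗ g`, of the kernel
`X = ∑_p w_p / (s j - s i) • 1_p ⊗ 1_p` on the `n - 1` gaps, whose `g`-trace is
`∑_p w_p ≥ (n - K) ∑_k w_k`. Cauchy–Schwarz on the diagonal of `X` gives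
`A_n ≥ 2 (∑_k w_k)² (1 - K / n)²`.

The `liminf` of a real sequence is only meaningful when the sequence is bounded above: here
`0 ≤ b ≤ 1`, and `b` vanishes unless the two intervals overlap, so `A_n ≤ 4 K (∑_k w_k)²`.
-/

theorem sum_sum_mul_mul_sq_sum_eq {ι α R : Type*} [CommSemiring R] (P : Finset ι) (M : Finset α)
    (c : ι → R) (u : ι → α → R) (g : α → R) :
    ∑ p ∈ P, ∑ q ∈ P, c p * c q * (∑ m ∈ M, g m * u p m * u q m) ^ 2 =
      ∑ m ∈ M, ∑ m' ∈ M, g m * g m' * (∑ p ∈ P, c p * u p m * u p m') ^ 2 := by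
  simp only [sq, sum_mul_sum]
  simp only [mul_sum]
  simp_rw [sum_comm (s := P) (t := M)]
  exact sum_congr rfl fun _ _ => sum_congr rfl fun _ _ =>
    sum_congr rfl fun _ _ => sum_congr rfl fun _ _ => by ring

theorem sq_sum_le_card_mul_sum_sum_mul_mul_sq {ι α R : Type*} [Field R] [LinearOrder R]
    [IsStrictOrderedRing R] (P : Finset ι) (M : Finset α) (c : ι → R) (u : ι → α → R)
    (g : α → R) (hg : ∀ m ∈ M, 0 ≤ g m) :
    (∑ p ∈ P, c p * ∑ m ∈ M, g m * u p m ^ 2) ^ 2 ≤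
      #M * ∑ p ∈ P, ∑ q ∈ P, c p * c q * (∑ m ∈ M, g m * u p m * u q m) ^ 2 := by
  set X : α → α → R := fun m m' => ∑ p ∈ P, c p * u p m * u p m'
  have htrace : ∑ p ∈ P, c p * ∑ m ∈ M, g m * u p m ^ 2 = ∑ m ∈ M, g m * X m m := by
    simp only [X, mul_sum]
    rw [sum_comm]
    exact sum_congr rfl fun _ _ => sum_congr rfl fun _ _ => by ring
  have hdiag : ∑ m ∈ M, (g m * X m m) ^ 2 ≤ ∑ m ∈ M, ∑ m' ∈ M, g m * g m' * X m m' ^ 2 := by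
    refine sum_le_sum fun m hm => ?_
    calc (g m * X m m) ^ 2 = g m * g m * X m m ^ 2 := by ring
      _ ≤ _ := single_le_sum (f := fun m' => g m * g m' * X m m' ^ 2)
          (fun m' hm' => by have := hg m hm; have := hg m' hm'; positivity) hm
  rw [sum_sum_mul_mul_sq_sum_eq, htrace]
  exact sq_sum_le_card_mul_sum_sq.trans (by gcongr)

theorem sum_mul_ite_mul_ite_eq_sum_Ico {R : Type*} [NonAssocSemiring R] (g : ℕ → R)
    {n i j k l : ℕ} (hi : 1 ≤ i) (hj : j ≤ n) (hk : 1 ≤ k) (hl : l ≤ n) :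
    ∑ m ∈ Ico 1 n, g m * (if m ∈ Ico i j then 1 else 0) * (if m ∈ Ico k l then 1 else 0) =
      ∑ m ∈ Ico (max i k) (min j l), g m := by
  have hinter : Ico 1 n ∩ Ico (max i k) (min j l) = Ico (max i k) (min j l) :=
    inter_eq_right.2 (Ico_subset_Ico (by omega) (by omega))
  rw [← hinter, ← sum_ite_mem, ← Ico_inter_Ico]
  refine sum_congr rfl fun m _ => ?_
  by_cases hA : m ∈ Ico i j <;> by_cases hB : m ∈ Ico k l <;> simp [hA, hB]

theorem sum_Icc_add_sub {M : Type*} [AddCommMonoid M] (w : ℕ → M) (i K : ℕ) :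
    ∑ j ∈ Icc (i + 1) (i + K), w (j - i) = ∑ k ∈ Icc 1 K, w k := by
  rw [← map_add_left_Icc, sum_map]
  simp

theorem bCoef_eq_zero (s : ℕ → ℝ) {i j k l : ℕ} (hij : i < j) (hkl : k < l)
    (h : j ≤ k ∨ l ≤ i) : bCoef s i j k l = 0 := by
  unfold bCoef
  split_ifs <;> first | rfl | omega

theorem bCoef_eq_sq_div (s : ℕ → ℝ) {i j k l : ℕ} (hij : i < j) (hkl : k < l)
    (hsij : s i ≠ s j) (hskl : s k ≠ s l) :
    bCoef s i j k l =
      (∑ m ∈ Ico (max i k) (min j l), (s (m + 1) - s m)) ^ 2 / ((s j - s i) * (s l - s k)) := by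
  have hij' : s j - s i ≠ 0 := sub_ne_zero.2 hsij.symm
  have hkl' : s l - s k ≠ 0 := sub_ne_zero.2 hskl.symm
  rcases le_or_gt (min j l) (max i k) with hdisj | hov
  · rw [Ico_eq_empty_of_le hdisj, sum_empty, bCoef_eq_zero s hij hkl (by omega)]
    simp
  rw [sum_Ico_sub s hov.le]
  unfold bCoef
  by_cases hik : i ≤ k
  · rw [if_pos hik, if_neg (by omega), max_eq_right hik]
    by_cases hjl : j ≤ l
    · rw [if_pos hjl, min_eq_left hjl]
    · rw [if_neg hjl, min_eq_right (by omega)]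
      field_simp
  · rw [if_neg hik, if_neg (by omega), max_eq_left (by omega)]
    by_cases hlj : l ≤ j
    · rw [if_pos hlj, min_eq_right hlj, mul_comm (s j - s i)]
    · rw [if_neg hlj, min_eq_left (by omega)]
      field_simp

noncomputable def weightedBSum (K n : ℕ) (w s : ℕ → ℝ) : ℝ :=
  ∑ i ∈ Icc 1 (n - 1), ∑ j ∈ Icc (i + 1) (min n (i + K)),
    ∑ k ∈ Icc 1 (n - 1), ∑ l ∈ Icc (k + 1) (min n (k + K)),
      w (j - i) * w (l - k) * bCoef s i j k l

def windowPairs (K n : ℕ) : Finset (Σ _ : ℕ, ℕ) :=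
  (Icc 1 (n - 1)).sigma fun i => Icc (i + 1) (min n (i + K))

section

variable {K n : ℕ} {w s : ℕ → ℝ}

theorem lt_succ_of_mem_Ico (hs : StrictMonoOn s (Set.Icc 1 n)) {m : ℕ} (hm : m ∈ Ico 1 n) :
    s m < s (m + 1) := by
  rw [mem_Ico] at hm
  exact hs ⟨hm.1, hm.2.le⟩ ⟨by omega, hm.2⟩ (Nat.lt_succ_self m)

theorem sum_Ico_max_min_le (hs : StrictMonoOn s (Set.Icc 1 n)) {i j : ℕ} (hi : 1 ≤ i)
    (hij : i ≤ j) (hj : j ≤ n) (k l : ℕ) :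
    ∑ m ∈ Ico (max i k) (min j l), (s (m + 1) - s m) ≤ s j - s i := by
  rw [← sum_Ico_sub s hij]
  refine sum_le_sum_of_subset_of_nonneg (Ico_subset_Ico (le_max_left _ _) (min_le_left _ _))
    fun m hm _ => (sub_pos.2 (lt_succ_of_mem_Ico hs ?_)).le
  rw [mem_Ico] at hm ⊢
  omega

theorem bCoef_mem_Icc (hs : StrictMonoOn s (Set.Icc 1 n)) {i j k l : ℕ} (hi : 1 ≤ i)
    (hij : i < j) (hj : j ≤ n) (hk : 1 ≤ k) (hkl : k < l) (hl : l ≤ n) :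
    bCoef s i j k l ∈ Set.Icc 0 1 := by
  have hsij : s i < s j := hs ⟨hi, by omega⟩ ⟨by omega, hj⟩ hij
  have hskl : s k < s l := hs ⟨hk, by omega⟩ ⟨by omega, hl⟩ hkl
  rw [bCoef_eq_sq_div s hij hkl hsij.ne hskl.ne]
  set O := ∑ m ∈ Ico (max i k) (min j l), (s (m + 1) - s m)
  have hO : 0 ≤ O := sum_nonneg fun m hm => (sub_pos.2 (lt_succ_of_mem_Ico hs (by
    rw [mem_Ico] at hm ⊢; omega))).le
  have hOij : O ≤ s j - s i := sum_Ico_max_min_le hs hi hij.le hj k l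
  have hOkl : O ≤ s l - s k := by
    simpa only [O, max_comm, min_comm] using sum_Ico_max_min_le hs hk hkl.le hl i j
  refine ⟨by positivity, div_le_one_of_le₀ ?_ (by nlinarith)⟩
  rw [sq]
  exact mul_le_mul hOij hOkl hO (by linarith)

theorem mem_windowPairs {p : Σ _ : ℕ, ℕ} :
    p ∈ windowPairs K n ↔ 1 ≤ p.1 ∧ p.1 < p.2 ∧ p.2 ≤ n ∧ p.2 ≤ p.1 + K := by
  simp only [windowPairs, mem_sigma, mem_Icc]
  omega

theorem weightedBSum_eq_sum_windowPairs :
    weightedBSum K n w s = ∑ p ∈ windowPairs K n, ∑ q ∈ windowPairs K n,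
      w (p.2 - p.1) * w (q.2 - q.1) * bCoef s p.1 p.2 q.1 q.2 := by
  rw [weightedBSum, windowPairs, sum_sigma']
  exact sum_congr rfl fun p _ => sum_sigma' _ _ _

theorem weightedBSum_eq_sum_sq (hs : StrictMonoOn s (Set.Icc 1 n)) :
    weightedBSum K n w s = ∑ p ∈ windowPairs K n, ∑ q ∈ windowPairs K n,
      w (p.2 - p.1) / (s p.2 - s p.1) * (w (q.2 - q.1) / (s q.2 - s q.1)) *
        (∑ m ∈ Ico 1 n, (s (m + 1) - s m) * (if m ∈ Ico p.1 p.2 then 1 else 0) *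
          (if m ∈ Ico q.1 q.2 then 1 else 0)) ^ 2 := by
  rw [weightedBSum_eq_sum_windowPairs]
  refine sum_congr rfl fun p hp => sum_congr rfl fun q hq => ?_
  obtain ⟨hp1, hp12, hp2, -⟩ := mem_windowPairs.1 hp
  obtain ⟨hq1, hq12, hq2, -⟩ := mem_windowPairs.1 hq
  rw [sum_mul_ite_mul_ite_eq_sum_Ico _ hp1 hp2 hq1 hq2,
    bCoef_eq_sq_div s hp12 hq12 (hs ⟨hp1, by omega⟩ ⟨by omega, hp2⟩ hp12).ne
      (hs ⟨hq1, by omega⟩ ⟨by omega, hq2⟩ hq12).ne]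
  simp only [div_eq_mul_inv, mul_inv]
  ring

theorem sq_sum_windowPairs_le (hs : StrictMonoOn s (Set.Icc 1 n)) :
    (∑ p ∈ windowPairs K n, w (p.2 - p.1)) ^ 2 ≤ ((n - 1 : ℕ) : ℝ) * weightedBSum K n w s := by
  have htrace : ∀ p ∈ windowPairs K n, w (p.2 - p.1) = w (p.2 - p.1) / (s p.2 - s p.1) *
      ∑ m ∈ Ico 1 n, (s (m + 1) - s m) * (if m ∈ Ico p.1 p.2 then (1 : ℝ) else 0) ^ 2 := by
    intro p hp
    obtain ⟨hp1, hp12, hp2, -⟩ := mem_windowPairs.1 hp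
    simp only [sq, ← mul_assoc]
    rw [sum_mul_ite_mul_ite_eq_sum_Ico _ hp1 hp2 hp1 hp2, max_self, min_self,
      sum_Ico_sub s hp12.le, div_mul_cancel₀]
    exact sub_ne_zero.2 (hs ⟨hp1, by omega⟩ ⟨by omega, hp2⟩ hp12).ne'
  rw [sum_congr rfl htrace, weightedBSum_eq_sum_sq hs, ← Nat.card_Ico 1 n]
  exact sq_sum_le_card_mul_sum_sum_mul_mul_sq _ _ _ _ _
    fun m hm => (sub_pos.2 (lt_succ_of_mem_Ico hs hm)).le

theorem sum_window_le (hw : ∀ k ∈ Icc 1 K, 0 ≤ w k) (i n : ℕ) :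
    ∑ j ∈ Icc (i + 1) (min n (i + K)), w (j - i) ≤ ∑ k ∈ Icc 1 K, w k := by
  rw [← sum_Icc_add_sub w i K]
  refine sum_le_sum_of_subset_of_nonneg (Icc_subset_Icc_right (min_le_right _ _))
    fun j hj _ => hw _ ?_
  rw [mem_Icc] at hj ⊢
  omega

theorem mul_sum_Icc_le_sum_windowPairs (hK : 1 ≤ K) (hKn : K ≤ n)
    (hw : ∀ k ∈ Icc 1 K, 0 ≤ w k) :
    ((n : ℝ) - K) * ∑ k ∈ Icc 1 K, w k ≤ ∑ p ∈ windowPairs K n, w (p.2 - p.1) := by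
  have hfull : ∀ i ∈ Icc 1 (n - K),
      ∑ j ∈ Icc (i + 1) (min n (i + K)), w (j - i) = ∑ k ∈ Icc 1 K, w k := by
    intro i hi
    rw [mem_Icc] at hi
    rw [min_eq_right (by omega), sum_Icc_add_sub]
  rw [windowPairs, sum_sigma]
  calc ((n : ℝ) - K) * ∑ k ∈ Icc 1 K, w k
      = ∑ i ∈ Icc 1 (n - K), ∑ j ∈ Icc (i + 1) (min n (i + K)), w (j - i) := by
        rw [sum_congr rfl hfull, sum_const, Nat.card_Icc, nsmul_eq_mul, add_tsub_cancel_right,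
          Nat.cast_sub hKn]
    _ ≤ ∑ i ∈ Icc 1 (n - 1), ∑ j ∈ Icc (i + 1) (min n (i + K)), w (j - i) :=
        sum_le_sum_of_subset_of_nonneg (Icc_subset_Icc_right (by omega))
          fun i _ _ => sum_nonneg fun j hj => hw _ (by rw [mem_Icc] at hj ⊢; omega)

theorem sum_window_mul_bCoef_le (hw : ∀ k ∈ Icc 1 K, 0 ≤ w k)
    (hs : StrictMonoOn s (Set.Icc 1 n)) {i j : ℕ} (hi : 1 ≤ i) (hij : i < j) (hj : j ≤ n)
    (hjK : j ≤ i + K) :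
    ∑ k ∈ Icc 1 (n - 1), ∑ l ∈ Icc (k + 1) (min n (k + K)), w (l - k) * bCoef s i j k l ≤
      2 * K * ∑ k ∈ Icc 1 K, w k := by
  set W := ∑ k ∈ Icc 1 K, w k
  have hnear : ∀ k ∈ Icc 1 (n - 1),
      ∑ l ∈ Icc (k + 1) (min n (k + K)), w (l - k) * bCoef s i j k l ≤
        if i < k + K ∧ k < j then W else 0 := by
    intro k hk
    rw [mem_Icc] at hk
    split_ifs with hik
    · refine (sum_le_sum fun l hl => ?_).trans (sum_window_le hw k n)
      rw [mem_Icc] at hl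
      exact mul_le_of_le_one_right (hw _ (by rw [mem_Icc]; omega))
        (bCoef_mem_Icc hs hi hij hj (by omega) (by omega) (by omega)).2
    · refine (sum_eq_zero fun l hl => ?_).le
      rw [mem_Icc] at hl
      rw [bCoef_eq_zero s hij (by omega) (by omega), mul_zero]
  have hcard : #((Icc 1 (n - 1)).filter fun k => i < k + K ∧ k < j) ≤ 2 * K :=
    calc _ ≤ #(Ico (i + 1 - K) j) := card_le_card fun k hk => by
          simp only [mem_filter, mem_Icc, mem_Ico] at hk ⊢; omega
      _ ≤ 2 * K := by rw [Nat.card_Ico]; omega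
  calc _ ≤ ∑ k ∈ Icc 1 (n - 1), if i < k + K ∧ k < j then W else 0 := sum_le_sum hnear
    _ = #((Icc 1 (n - 1)).filter fun k => i < k + K ∧ k < j) * W := by
        rw [sum_ite, sum_const, sum_const_zero, add_zero, nsmul_eq_mul]
    _ ≤ 2 * K * W := mul_le_mul_of_nonneg_right (by exact_mod_cast hcard) (sum_nonneg hw)

theorem weightedBSum_le (hw : ∀ k ∈ Icc 1 K, 0 ≤ w k) (hs : StrictMonoOn s (Set.Icc 1 n)) :
    weightedBSum K n w s ≤ 2 * K * n * (∑ k ∈ Icc 1 K, w k) ^ 2 := by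
  set W := ∑ k ∈ Icc 1 K, w k
  calc weightedBSum K n w s
      = ∑ i ∈ Icc 1 (n - 1), ∑ j ∈ Icc (i + 1) (min n (i + K)), w (j - i) *
          ∑ k ∈ Icc 1 (n - 1), ∑ l ∈ Icc (k + 1) (min n (k + K)),
            w (l - k) * bCoef s i j k l := by
        simp only [weightedBSum, mul_sum, mul_assoc]
    _ ≤ ∑ i ∈ Icc 1 (n - 1), ∑ j ∈ Icc (i + 1) (min n (i + K)), w (j - i) * (2 * K * W) := by
        refine sum_le_sum fun i hi => sum_le_sum fun j hj => ?_
        rw [mem_Icc] at hi hj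
        exact mul_le_mul_of_nonneg_left (sum_window_mul_bCoef_le hw hs (by omega) (by omega)
          (by omega) (by omega)) (hw _ (by rw [mem_Icc]; omega))
    _ = (∑ i ∈ Icc 1 (n - 1), ∑ j ∈ Icc (i + 1) (min n (i + K)), w (j - i)) * (2 * K * W) := by
        simp only [sum_mul]
    _ ≤ (n * W) * (2 * K * W) := by
        refine mul_le_mul_of_nonneg_right ?_ (by positivity [sum_nonneg hw])
        refine (sum_le_card_nsmul _ _ W fun i _ => sum_window_le hw i n).trans ?_
        rw [nsmul_eq_mul, Nat.card_Icc]
        exact mul_le_mul_of_nonneg_right (by exact_mod_cast (by omega : n - 1 + 1 - 1 ≤ n))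
          (sum_nonneg hw)
    _ = 2 * K * n * W ^ 2 := by ring

theorem mul_one_sub_div_sq_le_two_div_mul_weightedBSum (hK : 1 ≤ K) (hKn : K < n)
    (hw : ∀ k ∈ Icc 1 K, 0 ≤ w k) (hs : StrictMonoOn s (Set.Icc 1 n)) :
    2 * (∑ k ∈ Icc 1 K, w k) ^ 2 * (1 - K / n) ^ 2 ≤ 2 / n * weightedBSum K n w s := by
  set W := ∑ k ∈ Icc 1 K, w k
  set S := weightedBSum K n w s
  have hn : (0 : ℝ) < n := by exact_mod_cast (by omega : 0 < n)
  have htrace := mul_sum_Icc_le_sum_windowPairs hK hKn.le hw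
  have hcs : (∑ p ∈ windowPairs K n, w (p.2 - p.1)) ^ 2 ≤ ((n - 1 : ℕ) : ℝ) * S :=
    sq_sum_windowPairs_le hs
  have hn1 : (0 : ℝ) < ((n - 1 : ℕ) : ℝ) := by exact_mod_cast (by omega : 0 < n - 1)
  have hS : 0 ≤ S := nonneg_of_mul_nonneg_right ((sq_nonneg _).trans hcs) hn1
  calc 2 * W ^ 2 * (1 - K / n) ^ 2 = 2 / n ^ 2 * (((n : ℝ) - K) * W) ^ 2 := by
        field_simp
    _ ≤ 2 / n ^ 2 * (n * S) := by
        gcongr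
        calc (((n : ℝ) - K) * W) ^ 2 ≤ (∑ p ∈ windowPairs K n, w (p.2 - p.1)) ^ 2 := by
              gcongr
              have : (K : ℝ) < n := by exact_mod_cast hKn
              exact mul_nonneg (by linarith) (sum_nonneg hw)
          _ ≤ ((n - 1 : ℕ) : ℝ) * S := hcs
          _ ≤ n * S := mul_le_mul_of_nonneg_right (by exact_mod_cast Nat.sub_le n 1) hS
    _ = 2 / n * S := by
        field_simp

theorem two_div_mul_weightedBSum_le (hn : 0 < n) (hw : ∀ k ∈ Icc 1 K, 0 ≤ w k)
    (hs : StrictMonoOn s (Set.Icc 1 n)) :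
    2 / n * weightedBSum K n w s ≤ 4 * K * (∑ k ∈ Icc 1 K, w k) ^ 2 := by
  have hn' : (0 : ℝ) < n := by exact_mod_cast hn
  calc 2 / n * weightedBSum K n w s ≤ 2 / n * (2 * K * n * (∑ k ∈ Icc 1 K, w k) ^ 2) := by
        gcongr
        exact weightedBSum_le hw hs
    _ = 4 * K * (∑ k ∈ Icc 1 K, w k) ^ 2 := by
        field_simp
        ring

end

theorem liminf_variance_lower_bound_general (K : ℕ) (hK : 1 ≤ K) (w : ℕ → ℝ)
    (hw : ∀ k ∈ Finset.Icc 1 K, 0 ≤ w k)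
    (s : ℕ → ℕ → ℝ)
    (hmono : ∀ n, ∀ i, 1 ≤ i → i < n → s n i < s n (i + 1)) :
    2 * (∑ k ∈ Finset.Icc 1 K, w k) ^ 2 ≤
      Filter.atTop.liminf (fun n : ℕ =>
        (2 / (n : ℝ)) *
          ∑ i ∈ Finset.Icc 1 (n - 1), ∑ j ∈ Finset.Icc (i + 1) (min n (i + K)),
            ∑ k ∈ Finset.Icc 1 (n - 1), ∑ l ∈ Finset.Icc (k + 1) (min n (k + K)),
              w (j - i) * w (l - k) * bCoef (s n) i j k l) := by
  set W := ∑ k ∈ Icc 1 K, w k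
  change 2 * W ^ 2 ≤ atTop.liminf fun n : ℕ => 2 / (n : ℝ) * weightedBSum K n w (s n)
  have hs : ∀ n, StrictMonoOn (s n) (Set.Icc 1 n) := fun n =>
    strictMonoOn_of_lt_add_one Set.ordConnected_Icc fun i _ hi hi1 => hmono n i hi.1 hi1.2
  have hlim : Tendsto (fun n : ℕ => 2 * W ^ 2 * (1 - K / n) ^ 2) atTop (nhds (2 * W ^ 2)) := by
    simpa using (((tendsto_const_div_atTop_nhds_zero_nat (K : ℝ)).const_sub 1).pow 2).const_mul
      (2 * W ^ 2)
  have hlower : ∀ᶠ n : ℕ in atTop, 2 * W ^ 2 * (1 - K / n) ^ 2 ≤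
      2 / (n : ℝ) * weightedBSum K n w (s n) :=
    (eventually_gt_atTop K).mono fun n hn =>
      mul_one_sub_div_sq_le_two_div_mul_weightedBSum hK hn hw (hs n)
  have hupper : ∀ᶠ n : ℕ in atTop, 2 / (n : ℝ) * weightedBSum K n w (s n) ≤ 4 * K * W ^ 2 :=
    (eventually_gt_atTop 0).mono fun n hn => two_div_mul_weightedBSum_le hn hw (hs n)
  rw [← hlim.liminf_eq]
  exact liminf_le_liminf hlower hlim.isBoundedUnder_ge
    (isCoboundedUnder_ge_of_eventually_le atTop hupper)

/-- Lemma 4: the leading term `A_n` of the asymptotic variance `τ_n²` of the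
weighted pairwise likelihood estimators satisfies
`lim inf A_n ≥ 2 (∑_{k=1}^K w_k)²`, for triangular arrays of strictly
increasing observation points in `[0,1]` and nonnegative weights not all zero. -/
theorem liminf_variance_lower_bound (K : ℕ) (hK : 1 ≤ K) (w : ℕ → ℝ)
    (hw : ∀ k ∈ Finset.Icc 1 K, 0 ≤ w k)
    (hw0 : ∃ k ∈ Finset.Icc 1 K, w k ≠ 0)
    (s : ℕ → ℕ → ℝ)
    (hs : ∀ n, ∀ i, 1 ≤ i → i ≤ n → s n i ∈ Set.Icc (0 : ℝ) 1)
    (hmono : ∀ n, ∀ i, 1 ≤ i → i < n → s n i < s n (i + 1)) :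
    2 * (∑ k ∈ Finset.Icc 1 K, w k) ^ 2 ≤
      Filter.atTop.liminf (fun n : ℕ =>
        (2 / (n : ℝ)) *
          ∑ i ∈ Finset.Icc 1 (n - 1), ∑ j ∈ Finset.Icc (i + 1) (min n (i + K)),
            ∑ k ∈ Finset.Icc 1 (n - 1), ∑ l ∈ Finset.Icc (k + 1) (min n (k + K)),
              w (j - i) * w (l - k) * bCoef (s n) i j k l) :=
  liminf_variance_lower_bound_general K hK w hw s hmono
end

section
/- Let n ∈ ℕ, s_i = i/n for i ∈ {1,…,n}, and let 2 ≤ K < ∞ with weights w_1, …, w_K ≥ 0 not all zero and w_k > 0 for some k ≥ 2. With b_{i,j,k,ℓ} defined from these equispaced points as before, one has lim inf_{n→∞} (1/n) ∑_{i=1}^{n-k} ∑_{j=1}^{n-k} b_{i,i+k,j,j+k} ≥ 1 + (k−1)²/k² for every 2 ≤ k ≤ K; consequently lim inf_{n→∞} A_n > 2(∑_{k=1}^K w_k)², where A_n is the asymptotic-variance sum of Lemma 2. -/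
open Finset Filter

/-!
For the points `s m = m`, `bCoef s i j k l` is the squared length of the overlap of `[i, j]` and
`[k, l]` divided by the product of their lengths, and rescaling the points to `m / n` does not
change it. Each row of the first double sum contains the diagonal term `1` and the shifted term
`(k - 1)² / k²`. In a row of `A_n` away from the ends, an interval of length `a` meets the
`|a - b| + 1` intervals of length `b` nested with it, each with coefficient `min a b / max a b`,
which makes the row at least `(∑ w)² + w_k² (k - 1)² / k²`. All rows are bounded, since each
interval overlaps boundedly many others and every coefficient is at most `1`, so the lim inf of
the row averages is at least the interior row bound.
-/

section natCast

variable {i j k l : ℕ}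

theorem bCoef_div_const (s : ℕ → ℝ) {c : ℝ} (hc : c ≠ 0) :
    bCoef (fun m => s m / c) = bCoef s := by
  ext i j k l
  simp only [bCoef, ← sub_div, div_pow, div_mul_div_comm, ← sq]
  split_ifs <;> first
    | rfl
    | exact div_div_div_cancel_right₀ hc _ _
    | exact div_div_div_cancel_right₀ (pow_ne_zero 2 hc) _ _

theorem bCoef_natCast (hij : i < j) (hkl : k < l) :
    bCoef Nat.cast i j k l =
      ((min j l - max i k : ℕ) : ℝ) ^ 2 / (((j - i : ℕ) : ℝ) * ((l - k : ℕ) : ℝ)) := by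
  have hji : (j : ℝ) - i ≠ 0 := sub_ne_zero.2 (by exact_mod_cast hij.ne')
  have hlk : (l : ℝ) - k ≠ 0 := sub_ne_zero.2 (by exact_mod_cast hkl.ne')
  unfold bCoef
  split_ifs with h1 h2 h3 h4 h5
  · rw [Nat.sub_eq_zero_of_le (by omega)]; simp
  · rw [show min j l - max i k = j - k by omega]
    push_cast [Nat.cast_sub hij.le, Nat.cast_sub hkl.le, Nat.cast_sub (show k ≤ j by omega)]
    ring
  · rw [show min j l - max i k = l - k by omega]
    push_cast [Nat.cast_sub hij.le, Nat.cast_sub hkl.le]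
    field_simp
  · rw [Nat.sub_eq_zero_of_le (by omega)]; simp
  · rw [show min j l - max i k = l - i by omega]
    push_cast [Nat.cast_sub hij.le, Nat.cast_sub hkl.le, Nat.cast_sub (show i ≤ l by omega)]
    ring
  · rw [show min j l - max i k = j - i by omega]
    push_cast [Nat.cast_sub hij.le, Nat.cast_sub hkl.le]
    field_simp

theorem bCoef_natCast_eq_zero (hij : i < j) (hkl : k < l) (h : j ≤ k ∨ l ≤ i) :
    bCoef Nat.cast i j k l = 0 := by
  rw [bCoef_natCast hij hkl, Nat.sub_eq_zero_of_le (by omega)]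
  simp

theorem bCoef_natCast_nonneg (hij : i < j) (hkl : k < l) : 0 ≤ bCoef Nat.cast i j k l := by
  rw [bCoef_natCast hij hkl]
  positivity

theorem bCoef_natCast_le_one (hij : i < j) (hkl : k < l) : bCoef Nat.cast i j k l ≤ 1 := by
  rw [bCoef_natCast hij hkl, sq]
  apply div_le_one_of_le₀ _ (by positivity)
  exact_mod_cast Nat.mul_le_mul (by omega) (by omega)

theorem bCoef_natCast_self (hij : i < j) : bCoef Nat.cast i j i j = 1 := by
  have : ((j - i : ℕ) : ℝ) ≠ 0 := by exact_mod_cast (Nat.sub_pos_of_lt hij).ne'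
  rw [bCoef_natCast hij hij, min_self, max_self, sq, div_self (mul_ne_zero this this)]

theorem bCoef_natCast_succ {c : ℕ} (hc : 0 < c) :
    bCoef Nat.cast i (i + c) (i + 1) (i + 1 + c) = ((c : ℝ) - 1) ^ 2 / (c : ℝ) ^ 2 := by
  rw [bCoef_natCast (by omega) (by omega),
    show min (i + c) (i + 1 + c) - max i (i + 1) = c - 1 by omega, show i + c - i = c by omega,
    show i + 1 + c - (i + 1) = c by omega, Nat.cast_sub hc, Nat.cast_one, sq (c : ℝ)]

theorem bCoef_natCast_of_le_of_le {a b : ℕ} (hb : 0 < b) (hik : i ≤ k) (hkb : k + b ≤ i + a) :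
    bCoef Nat.cast i (i + a) k (k + b) = b / a := by
  have hb' : (b : ℝ) ≠ 0 := by exact_mod_cast hb.ne'
  rw [bCoef_natCast (by omega) (by omega), show min (i + a) (k + b) - max i k = b by omega,
    show i + a - i = a by omega, show k + b - k = b by omega]
  field_simp

theorem bCoef_natCast_of_ge_of_ge {a b : ℕ} (ha : 0 < a) (hki : k ≤ i) (hia : i + a ≤ k + b) :
    bCoef Nat.cast i (i + a) k (k + b) = a / b := by
  have ha' : (a : ℝ) ≠ 0 := by exact_mod_cast ha.ne'
  rw [bCoef_natCast (by omega) (by omega), show min (i + a) (k + b) - max i k = a by omega,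
    show i + a - i = a by omega, show k + b - k = b by omega]
  field_simp

end natCast

theorem one_le_natCast_sub_add_one_mul_div {m M : ℕ} (hm : 0 < m) (h : m ≤ M) :
    1 ≤ ((M - m + 1 : ℕ) : ℝ) * (m / M) := by
  have hM : (0 : ℝ) < M := by exact_mod_cast hm.trans_le h
  rw [mul_div_assoc', one_le_div hM]
  have : M - m ≤ (M - m) * m := Nat.le_mul_of_pos_right _ hm
  exact_mod_cast (show M ≤ (M - m + 1) * m by rw [Nat.succ_mul]; omega)

theorem one_add_le_sum_bCoef_natCast {i c : ℕ} {T : Finset ℕ} (hc : 0 < c) (hi : i ∈ T)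
    (hi' : i + 1 ∈ T) :
    1 + ((c : ℝ) - 1) ^ 2 / (c : ℝ) ^ 2 ≤ ∑ j ∈ T, bCoef Nat.cast i (i + c) j (j + c) := by
  rw [← bCoef_natCast_succ (i := i) hc, ← bCoef_natCast_self (by omega : i < i + c),
    ← sum_pair (f := fun j => bCoef Nat.cast i (i + c) j (j + c)) (by omega : i ≠ i + 1)]
  exact sum_le_sum_of_subset_of_nonneg (insert_subset hi (singleton_subset_iff.2 hi'))
    fun j _ _ => bCoef_natCast_nonneg (by omega) (by omega)

theorem one_le_sum_bCoef_natCast {i a b : ℕ} {T : Finset ℕ} (ha : 0 < a) (hb : 0 < b)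
    (hbi : b ≤ i) (hT : Icc (i - b) (i + a) ⊆ T) :
    1 ≤ ∑ k ∈ T, bCoef Nat.cast i (i + a) k (k + b) := by
  have hsum {U : Finset ℕ} (hU : U ⊆ Icc (i - b) (i + a)) (x : ℝ)
      (hx : ∀ k ∈ U, bCoef Nat.cast i (i + a) k (k + b) = x) :
      (#U : ℝ) * x ≤ ∑ k ∈ T, bCoef Nat.cast i (i + a) k (k + b) := by
    rw [← nsmul_eq_mul, ← sum_const, ← sum_congr rfl hx]
    exact sum_le_sum_of_subset_of_nonneg (hU.trans hT)
      fun k _ _ => bCoef_natCast_nonneg (by omega) (by omega)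
  rcases le_total b a with hba | hab
  · have hcard : #(Icc i (i + (a - b))) = a - b + 1 := by simp only [Nat.card_Icc]; omega
    refine (one_le_natCast_sub_add_one_mul_div hb hba).trans ?_
    rw [← hcard]
    exact hsum (Icc_subset_Icc (by omega) (by omega)) _
      fun k hk => bCoef_natCast_of_le_of_le hb (mem_Icc.1 hk).1 (by grind)
  · have hcard : #(Icc (i - (b - a)) i) = b - a + 1 := by simp only [Nat.card_Icc]; omega
    refine (one_le_natCast_sub_add_one_mul_div ha hab).trans ?_
    rw [← hcard]
    exact hsum (Icc_subset_Icc (by omega) (by omega)) _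
      fun k hk => bCoef_natCast_of_ge_of_ge ha (mem_Icc.1 hk).2 (by grind)

section SumBounds

variable {α : Type*} {S T : Finset α} {f : α → ℝ} {N : ℕ} {M : ℝ}

theorem sum_le_mul_of_card_le (hS : #S ≤ N) (hM : 0 ≤ M) (hf : ∀ x ∈ S, f x ≤ M) :
    ∑ x ∈ S, f x ≤ N * M := by
  refine (sum_le_card_nsmul S f M hf).trans ?_
  rw [nsmul_eq_mul]
  gcongr

theorem sum_le_mul_of_eq_zero_off [DecidableEq α] (hT : #T ≤ N) (hM : 0 ≤ M)
    (h0 : ∀ x ∈ S, x ∉ T → f x = 0) (hf : ∀ x ∈ S, f x ≤ M) :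
    ∑ x ∈ S, f x ≤ N * M := by
  rw [← sum_subset inter_subset_left
    fun x hx hxST => h0 x hx fun hxT => hxST (mem_inter.2 ⟨hx, hxT⟩)]
  exact sum_le_mul_of_card_le ((card_le_card inter_subset_right).trans hT) hM
    fun x hx => hf x (mem_inter.1 hx).1

theorem card_mul_le_sum (hTS : T ⊆ S) (hf0 : ∀ x ∈ S, 0 ≤ f x) (hf : ∀ x ∈ T, M ≤ f x) :
    #T * M ≤ ∑ x ∈ S, f x := by
  rw [← nsmul_eq_mul]
  exact (card_nsmul_le_sum T f M hf).trans
    (sum_le_sum_of_subset_of_nonneg hTS fun x hx _ => hf0 x hx)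

end SumBounds

theorem sq_sum_add_le_sum_sum_mul {α : Type*} {S : Finset α} {u : α → ℝ}
    {G : α → α → ℝ} {x : α} {e : ℝ} (hu : ∀ a ∈ S, 0 ≤ u a)
    (hG : ∀ a ∈ S, ∀ b ∈ S, 1 ≤ G a b) (hx : x ∈ S) (he : 1 + e ≤ G x x) :
    (∑ a ∈ S, u a) ^ 2 + u x ^ 2 * e ≤ ∑ a ∈ S, ∑ b ∈ S, u a * u b * G a b := by
  have hnn : ∀ a ∈ S, ∀ b ∈ S, 0 ≤ u a * u b * (G a b - 1) := fun a ha b hb =>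
    mul_nonneg (mul_nonneg (hu a ha) (hu b hb)) (sub_nonneg.2 (hG a ha b hb))
  have hdiag : u x ^ 2 * e ≤ ∑ a ∈ S, ∑ b ∈ S, u a * u b * (G a b - 1) :=
    calc u x ^ 2 * e ≤ u x * u x * (G x x - 1) := by
          rw [← sq]; exact mul_le_mul_of_nonneg_left (by linarith) (sq_nonneg _)
      _ ≤ ∑ b ∈ S, u x * u b * (G x b - 1) :=
          single_le_sum (f := fun b => u x * u b * (G x b - 1)) (hnn x hx) hx
      _ ≤ _ := single_le_sum (f := fun a => ∑ b ∈ S, u a * u b * (G a b - 1))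
          (fun a ha => sum_nonneg (hnn a ha)) hx
  simp only [mul_sub, mul_one, sum_sub_distrib] at hdiag
  rw [sq, sum_mul_sum]
  linarith

theorem mul_le_liminf_div_mul {S : ℕ → ℝ} {a B C : ℝ} (m : ℕ) (ha : 0 ≤ a)
    (hlow : ∀ᶠ n in atTop, ((n - m : ℕ) : ℝ) * C ≤ S n)
    (hup : ∀ᶠ n in atTop, S n ≤ n * B) :
    a * C ≤ liminf (fun n : ℕ => a / n * S n) atTop := by
  have hlim : Tendsto (fun n : ℕ => ((n - m : ℕ) : ℝ) / n * (a * C)) atTop (nhds (a * C)) := by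
    have h : Tendsto (fun n : ℕ => (1 - (m : ℝ) / n) * (a * C)) atTop
        (nhds ((1 - 0) * (a * C))) :=
      ((tendsto_const_div_atTop_nhds_zero_nat _).const_sub 1).mul_const _
    rw [sub_zero, one_mul] at h
    refine h.congr' ?_
    filter_upwards [eventually_ge_atTop (max m 1)] with n hn
    have hn0 : (n : ℝ) ≠ 0 := by exact_mod_cast (by omega : n ≠ 0)
    rw [Nat.cast_sub (le_of_max_le_left hn), sub_div, div_self hn0]
  have hbdd : IsBoundedUnder (· ≤ ·) atTop fun n : ℕ => a / n * S n := by
    refine ⟨a * B, eventually_map.2 ?_⟩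
    filter_upwards [hup, eventually_ne_atTop 0] with n hn hn0
    calc a / n * S n ≤ a / n * (n * B) := by gcongr
      _ = a * B := by field_simp
  rw [← hlim.liminf_eq]
  refine liminf_le_liminf ?_ hlim.isBoundedUnder_ge hbdd.isCoboundedUnder_ge
  filter_upwards [hlow] with n hn
  calc ((n - m : ℕ) : ℝ) / n * (a * C) = a / n * (((n - m : ℕ) : ℝ) * C) := by ring
    _ ≤ a / n * S n := by gcongr

theorem one_add_sq_div_le_liminf {c : ℕ} (hc : 0 < c) :
    1 + ((c : ℝ) - 1) ^ 2 / (c : ℝ) ^ 2 ≤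
      liminf (fun n : ℕ => 1 / (n : ℝ) * ∑ i ∈ Icc 1 (n - c), ∑ j ∈ Icc 1 (n - c),
        bCoef (fun m => (m : ℝ) / (n : ℝ)) i (i + c) j (j + c)) atTop := by
  rw [← one_mul (1 + _)]
  refine mul_le_liminf_div_mul (B := ((2 * c + 1 : ℕ) : ℝ)) (c + 1) zero_le_one ?_ ?_
  · filter_upwards [eventually_ne_atTop 0] with n hn
    have hcard : #(Icc 1 (n - (c + 1))) = n - (c + 1) := by simp
    rw [bCoef_div_const _ (Nat.cast_ne_zero.2 hn), ← hcard]
    refine card_mul_le_sum (Icc_subset_Icc_right (by omega))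
      (fun i _ => sum_nonneg fun j _ => bCoef_natCast_nonneg (by omega) (by omega))
      fun i hi => one_add_le_sum_bCoef_natCast hc ?_ ?_
    all_goals simp only [mem_Icc] at hi ⊢; omega
  · filter_upwards [eventually_ne_atTop 0] with n hn
    rw [bCoef_div_const _ (Nat.cast_ne_zero.2 hn)]
    refine sum_le_mul_of_card_le (by simp) (by positivity) fun i _ => ?_
    rw [← mul_one ((2 * c + 1 : ℕ) : ℝ)]
    refine sum_le_mul_of_eq_zero_off (T := Icc (i - c) (i + c)) (by simp; omega) zero_le_one
      (fun j hj hji => bCoef_natCast_eq_zero (by omega) (by omega) ?_)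
      fun j _ => bCoef_natCast_le_one (by omega) (by omega)
    simp only [mem_Icc] at hji
    omega

/-- The terms of `n A_n / 2` whose first interval starts at `i`. -/
noncomputable def weightedRow (w : ℕ → ℝ) (K n i : ℕ) : ℝ :=
  ∑ j ∈ Icc (i + 1) (min n (i + K)), ∑ k ∈ Icc 1 (n - 1),
    ∑ l ∈ Icc (k + 1) (min n (k + K)), w (j - i) * w (l - k) * bCoef Nat.cast i j k l

section weightedRow

variable {w : ℕ → ℝ} {K n i : ℕ}

theorem sub_mem_Icc_of_mem_Icc_min {j : ℕ} (hj : j ∈ Icc (i + 1) (min n (i + K))) :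
    j - i ∈ Icc 1 K := by
  simp only [mem_Icc] at *
  omega

theorem weight_mul_bCoef_natCast_nonneg (hw : ∀ k ∈ Icc 1 K, 0 ≤ w k) {j k l : ℕ}
    (hj : j ∈ Icc (i + 1) (min n (i + K))) (hl : l ∈ Icc (k + 1) (min n (k + K))) :
    0 ≤ w (j - i) * w (l - k) * bCoef Nat.cast i j k l := by
  have hij : i < j := by simp only [mem_Icc] at hj; omega
  have hkl : k < l := by simp only [mem_Icc] at hl; omega
  exact mul_nonneg (mul_nonneg (hw _ (sub_mem_Icc_of_mem_Icc_min hj))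
    (hw _ (sub_mem_Icc_of_mem_Icc_min hl))) (bCoef_natCast_nonneg hij hkl)

theorem weightedRow_nonneg (hw : ∀ k ∈ Icc 1 K, 0 ≤ w k) : 0 ≤ weightedRow w K n i :=
  sum_nonneg fun _ hj => sum_nonneg fun _ _ => sum_nonneg fun _ hl =>
    weight_mul_bCoef_natCast_nonneg hw hj hl

theorem weightedRow_le (hw : ∀ k ∈ Icc 1 K, 0 ≤ w k) :
    weightedRow w K n i ≤ 2 * K ^ 3 * (∑ k ∈ Icc 1 K, w k) ^ 2 := by
  set W := ∑ k ∈ Icc 1 K, w k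
  have hW0 : 0 ≤ W := sum_nonneg hw
  have hW : ∀ k ∈ Icc 1 K, w k ≤ W := fun k hk => single_le_sum hw hk
  refine (sum_le_mul_of_card_le (N := K) (M := (2 * K : ℕ) * (K * W ^ 2)) (by simp; omega)
    (by positivity) fun j hj => ?_).trans_eq (by push_cast; ring)
  have hji := sub_mem_Icc_of_mem_Icc_min hj
  have hij : i < j := by simp only [mem_Icc] at hj; omega
  have hjK : j ≤ i + K := by simp only [mem_Icc] at hj; omega
  refine sum_le_mul_of_eq_zero_off (T := Icc (i - K) (j - 1)) (by simp; omega) (by positivity)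
    (fun k _ hk => sum_eq_zero fun l hl => ?_) fun k _ => ?_
  · simp only [mem_Icc] at hk hl
    rw [bCoef_natCast_eq_zero hij (by omega) (by omega), mul_zero]
  · refine sum_le_mul_of_card_le (by simp; omega) (by positivity) fun l hl => ?_
    have hlk := sub_mem_Icc_of_mem_Icc_min hl
    have hkl : k < l := by simp only [mem_Icc] at hl; omega
    calc w (j - i) * w (l - k) * bCoef Nat.cast i j k l ≤ w (j - i) * w (l - k) * 1 :=
          mul_le_mul_of_nonneg_left (bCoef_natCast_le_one hij hkl)
            (mul_nonneg (hw _ hji) (hw _ hlk))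
      _ ≤ W * W := by
          rw [mul_one]
          exact mul_le_mul (hW _ hji) (hW _ hlk) (hw _ hlk) hW0
      _ = W ^ 2 := (sq W).symm

theorem sq_sum_add_le_weightedRow (hw : ∀ k ∈ Icc 1 K, 0 ≤ w k) {c : ℕ} (hc : c ∈ Icc 1 K)
    (hi : K < i) (hin : i + 2 * K ≤ n) :
    (∑ k ∈ Icc 1 K, w k) ^ 2 + w c ^ 2 * (((c : ℝ) - 1) ^ 2 / (c : ℝ) ^ 2) ≤
      weightedRow w K n i := by
  obtain ⟨hc1, hcK⟩ := mem_Icc.1 hc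
  refine (sq_sum_add_le_sum_sum_mul
    (G := fun a b => ∑ k ∈ Icc (i - K) (i + K), bCoef Nat.cast i (i + a) k (k + b)) hw
    (fun a ha b hb => ?_) hc (one_add_le_sum_bCoef_natCast hc1 ?_ ?_)).trans ?_
  · simp only [mem_Icc] at ha hb
    exact one_le_sum_bCoef_natCast (by omega) (by omega) (by omega)
      (Icc_subset_Icc (by omega) (by omega))
  · simp only [mem_Icc]; omega
  · simp only [mem_Icc]; omega
  rw [weightedRow, min_eq_right (by omega : i + K ≤ n), ← map_add_left_Icc, sum_map]
  refine sum_le_sum fun a ha => ?_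
  simp only [addLeftEmbedding_apply, Nat.add_sub_cancel_left]
  calc ∑ b ∈ Icc 1 K, w a * w b * ∑ k ∈ Icc (i - K) (i + K),
          bCoef Nat.cast i (i + a) k (k + b)
      = ∑ k ∈ Icc (i - K) (i + K), ∑ l ∈ Icc (k + 1) (min n (k + K)),
          w a * w (l - k) * bCoef Nat.cast i (i + a) k l := by
        simp_rw [mul_sum]
        rw [sum_comm]
        refine sum_congr rfl fun k hk => ?_
        rw [min_eq_right (by simp only [mem_Icc] at hk; omega), ← map_add_left_Icc, sum_map]
        simp only [addLeftEmbedding_apply, Nat.add_sub_cancel_left]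
    _ ≤ _ := sum_le_sum_of_subset_of_nonneg (Icc_subset_Icc (by omega) (by omega))
        fun k _ _ => sum_nonneg fun l hl => by
          simpa only [Nat.add_sub_cancel_left] using weight_mul_bCoef_natCast_nonneg hw
            (i := i) (j := i + a) (by simp only [mem_Icc] at ha ⊢; omega) hl

end weightedRow

theorem two_mul_sq_sum_lt_liminf {K : ℕ} {w : ℕ → ℝ} (hw : ∀ k ∈ Icc 1 K, 0 ≤ w k)
    (hw2 : ∃ k ∈ Icc 2 K, 0 < w k) :
    2 * (∑ k ∈ Icc 1 K, w k) ^ 2 <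
      liminf (fun n : ℕ => 2 / (n : ℝ) *
        ∑ i ∈ Icc 1 (n - 1), ∑ j ∈ Icc (i + 1) (min n (i + K)),
          ∑ k ∈ Icc 1 (n - 1), ∑ l ∈ Icc (k + 1) (min n (k + K)),
            w (j - i) * w (l - k) * bCoef (fun m => (m : ℝ) / (n : ℝ)) i j k l) atTop := by
  obtain ⟨c, hc, hwc⟩ := hw2
  obtain ⟨hc2, hcK⟩ := mem_Icc.1 hc
  have hgap : 0 < w c ^ 2 * (((c : ℝ) - 1) ^ 2 / (c : ℝ) ^ 2) := by
    have : (1 : ℝ) < c := by exact_mod_cast hc2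
    have : (0 : ℝ) < c - 1 := by linarith
    positivity
  refine (mul_lt_mul_of_pos_left (lt_add_of_pos_right _ hgap) two_pos).trans_le
    (mul_le_liminf_div_mul (B := 2 * K ^ 3 * (∑ k ∈ Icc 1 K, w k) ^ 2) (3 * K) zero_le_two
      ?_ ?_)
  · filter_upwards [eventually_ne_atTop 0] with n hn
    have hcard : #(Icc (K + 1) (n - 2 * K)) = n - 3 * K := by simp; omega
    rw [bCoef_div_const _ (Nat.cast_ne_zero.2 hn), ← hcard]
    refine card_mul_le_sum (f := weightedRow w K n) (Icc_subset_Icc (by omega) (by omega))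
      (fun i _ => weightedRow_nonneg hw) fun i hi => ?_
    simp only [mem_Icc] at hi
    exact sq_sum_add_le_weightedRow hw (Icc_subset_Icc_left one_le_two hc) (by omega) (by omega)
  · filter_upwards [eventually_ne_atTop 0] with n hn
    rw [bCoef_div_const _ (Nat.cast_ne_zero.2 hn)]
    exact sum_le_mul_of_card_le (f := weightedRow w K n) (by simp) (by positivity)
      fun i _ => weightedRow_le hw

theorem equispaced_strictly_larger_variance_general (K : ℕ) (w : ℕ → ℝ)
    (hw : ∀ k ∈ Finset.Icc 1 K, 0 ≤ w k)
    (hw2 : ∃ k ∈ Finset.Icc 2 K, 0 < w k) :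
    (∀ k : ℕ, 2 ≤ k → k ≤ K →
      1 + ((k : ℝ) - 1) ^ 2 / (k : ℝ) ^ 2 ≤
        Filter.atTop.liminf (fun n : ℕ =>
          (1 / (n : ℝ)) *
            ∑ i ∈ Finset.Icc 1 (n - k), ∑ j ∈ Finset.Icc 1 (n - k),
              bCoef (fun m => (m : ℝ) / (n : ℝ)) i (i + k) j (j + k))) ∧
    2 * (∑ k ∈ Finset.Icc 1 K, w k) ^ 2 <
      Filter.atTop.liminf (fun n : ℕ =>
        (2 / (n : ℝ)) *
          ∑ i ∈ Finset.Icc 1 (n - 1), ∑ j ∈ Finset.Icc (i + 1) (min n (i + K)),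
            ∑ k ∈ Finset.Icc 1 (n - 1), ∑ l ∈ Finset.Icc (k + 1) (min n (k + K)),
              w (j - i) * w (l - k) *
                bCoef (fun m => (m : ℝ) / (n : ℝ)) i j k l) :=
  ⟨fun _ hk _ => one_add_sq_div_le_liminf (by omega), two_mul_sq_sum_lt_liminf hw hw2⟩

/-- Lemma 6: for equispaced points `s_i = i/n` and `2 ≤ K < ∞` with some
`w_k > 0` for `k ≥ 2`, one has
`lim inf (1/n) ∑_{i=1}^{n-k} ∑_{j=1}^{n-k} b_{i,i+k,j,j+k} ≥ 1 + (k-1)²/k²`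
for every `2 ≤ k ≤ K`; consequently `lim inf A_n > 2 (∑_{k=1}^K w_k)²`. -/
theorem equispaced_strictly_larger_variance (K : ℕ) (hK : 2 ≤ K) (w : ℕ → ℝ)
    (hw : ∀ k ∈ Finset.Icc 1 K, 0 ≤ w k)
    (hw2 : ∃ k ∈ Finset.Icc 2 K, 0 < w k) :
    (∀ k : ℕ, 2 ≤ k → k ≤ K →
      1 + ((k : ℝ) - 1) ^ 2 / (k : ℝ) ^ 2 ≤
        Filter.atTop.liminf (fun n : ℕ =>
          (1 / (n : ℝ)) *
            ∑ i ∈ Finset.Icc 1 (n - k), ∑ j ∈ Finset.Icc 1 (n - k),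
              bCoef (fun m => (m : ℝ) / (n : ℝ)) i (i + k) j (j + k))) ∧
    2 * (∑ k ∈ Finset.Icc 1 K, w k) ^ 2 <
      Filter.atTop.liminf (fun n : ℕ =>
        (2 / (n : ℝ)) *
          ∑ i ∈ Finset.Icc 1 (n - 1), ∑ j ∈ Finset.Icc (i + 1) (min n (i + K)),
            ∑ k ∈ Finset.Icc 1 (n - 1), ∑ l ∈ Finset.Icc (k + 1) (min n (k + K)),
              w (j - i) * w (l - k) *
                bCoef (fun m => (m : ℝ) / (n : ℝ)) i j k l) :=
  equispaced_strictly_larger_variance_general K w hw hw2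
end

section
/- Let Z be the stationary Ornstein–Uhlenbeck process with cov(Z(s),Z(t)) = σ₀² e^{−θ₀|s−t|}, let 0 ≤ s_1 < … < s_n ≤ 1 and let W_{i,j} as above. Define b_{i,j,k,ℓ} = 0 if j ≤ k, b_{i,j,k,ℓ} = (s_j − s_k)²/((s_j − s_i)(s_ℓ − s_k)) if k ≤ j ≤ ℓ, and b_{i,j,k,ℓ} = (s_ℓ − s_k)/(s_j − s_i) if k ≤ ℓ ≤ j. Then for i ≤ k, i < j, k < ℓ with gaps j−i, ℓ−k bounded by K, Cov(W_{i,j}, W_{k,ℓ})² = b_{i,j,k,ℓ} + O(s_{max(i,j,k,ℓ)} − s_{min(i,j,k,ℓ)}) uniformly over such index tuples; in particular Cov(W_{i,j}, W_{k,ℓ})² tends to b_{i,j,k,ℓ} as the mesh max(s_{m+1} − s_m) → 0. -/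
open MeasureTheory ProbabilityTheory Finset
open scoped NNReal ENNReal

set_option maxHeartbeats 1000000

/-- The normalized innovation `W_{p,q}` of the Ornstein–Uhlenbeck process `Z`
at points `s p < s q`. -/
noncomputable def OUInnov (θ₀ σ₀sq : ℝ) {Ω : Type*} (Z : ℝ → Ω → ℝ)
    (s : ℕ → ℝ) (p q : ℕ) (ω : Ω) : ℝ :=
  (Z (s q) ω - Real.exp (-θ₀ * (s q - s p)) * Z (s p) ω) /
    Real.sqrt (σ₀sq * (1 - Real.exp (-2 * θ₀ * (s q - s p))))

section OUhelpers

open Real Filter Set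




lemma OU_exp_prod_one (y : ℝ) : Real.exp y * Real.exp (-y) = 1 := by
  rw [← Real.exp_add]; simp

lemma OU_g_ub (θ x : ℝ) : 1 - Real.exp (-2 * θ * x) ≤ 2 * θ * x := by
  linarith [Real.add_one_le_exp (-2 * θ * x)]

lemma OU_g_lb (θ x : ℝ) (h : 0 ≤ 2 * θ * x) :
    2 * θ * x * Real.exp (-2 * θ * x) ≤ 1 - Real.exp (-2 * θ * x) := by
  have h1 : Real.exp (2 * θ * x) * Real.exp (-2 * θ * x) = 1 := by
    rw [← Real.exp_add]
    norm_num
  have h2 := Real.add_one_le_exp (2 * θ * x)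
  nlinarith [mul_le_mul_of_nonneg_right h2 (Real.exp_pos (-2 * θ * x)).le]

lemma OU_est {θ A B u w S : ℝ} (hθ : 0 < θ) (hA : 0 < A) (hB : 0 < B) (hu : 0 < u)
    (huA : u ≤ A) (huB : u ≤ B) (hw : 0 ≤ w) (hAS : A ≤ S) (hBS : B ≤ S)
    (huS : u ≤ S) (hwS : w ≤ S) (hS1 : S ≤ 1) :
    |(Real.exp (-θ * w) * (1 - Real.exp (-2 * θ * u))) ^ 2 /
        ((1 - Real.exp (-2 * θ * A)) * (1 - Real.exp (-2 * θ * B))) - u ^ 2 / (A * B)|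
      ≤ 6 * θ * Real.exp (4 * θ) * S := by
  have hS0 : 0 < S := lt_of_lt_of_le hu huS
  have hθA : 0 < 2 * θ * A := by positivity
  have hθB : 0 < 2 * θ * B := by positivity
  have hθu : 0 < 2 * θ * u := by positivity
  have hgA : 0 < 1 - Real.exp (-2 * θ * A) := by
    have : Real.exp (-2 * θ * A) < 1 := Real.exp_lt_one_iff.mpr (by linarith)
    linarith
  have hgB : 0 < 1 - Real.exp (-2 * θ * B) := by
    have : Real.exp (-2 * θ * B) < 1 := Real.exp_lt_one_iff.mpr (by linarith)
    linarith
  have hgu : 0 < 1 - Real.exp (-2 * θ * u) := by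
    have : Real.exp (-2 * θ * u) < 1 := Real.exp_lt_one_iff.mpr (by linarith)
    linarith
  have hguU := OU_g_ub θ u
  have hgAL := OU_g_lb θ A hθA.le
  have hgBL := OU_g_lb θ B hθB.le
  have hguL := OU_g_lb θ u hθu.le
  have hgAU := OU_g_ub θ A
  have hgBU := OU_g_ub θ B
  have hAB : 0 < A * B := mul_pos hA hB
  have hp0 : 0 ≤ u ^ 2 / (A * B) := by positivity
  have hp1 : u ^ 2 / (A * B) ≤ 1 := by
    rw [div_le_one hAB, sq]
    exact mul_le_mul huA huB hu.le hA.le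
  have hpAB : u ^ 2 / (A * B) * (A * B) = u ^ 2 := div_mul_cancel₀ _ hAB.ne'
  have hew1 : Real.exp (-θ * w) ≤ 1 := Real.exp_le_one_iff.mpr (by nlinarith)
  have hewpos : 0 < Real.exp (-θ * w) := Real.exp_pos _
  have hY0 : 0 ≤ Real.exp (-θ * w) * (1 - Real.exp (-2 * θ * u)) := by positivity
  -- upper bound
  have hXA : 2 * θ * A ≤ Real.exp (2 * θ * A) * (1 - Real.exp (-2 * θ * A)) := by
    have h1 : Real.exp (2 * θ * A) * Real.exp (-(2 * θ * A)) = 1 := OU_exp_prod_one _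
    have h2 : Real.exp (-(2 * θ * A)) = Real.exp (-2 * θ * A) := by norm_num
    rw [h2] at h1
    nlinarith [Real.exp_pos (2 * θ * A)]
  have hXB : 2 * θ * B ≤ Real.exp (2 * θ * B) * (1 - Real.exp (-2 * θ * B)) := by
    have h1 : Real.exp (2 * θ * B) * Real.exp (-(2 * θ * B)) = 1 := OU_exp_prod_one _
    have h2 : Real.exp (-(2 * θ * B)) = Real.exp (-2 * θ * B) := by norm_num
    rw [h2] at h1
    nlinarith [Real.exp_pos (2 * θ * B)]
  have hub : (Real.exp (-θ * w) * (1 - Real.exp (-2 * θ * u))) ^ 2 /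
      ((1 - Real.exp (-2 * θ * A)) * (1 - Real.exp (-2 * θ * B))) ≤
      u ^ 2 / (A * B) * (Real.exp (2 * θ * A) * Real.exp (2 * θ * B)) := by
    rw [div_le_iff₀ (mul_pos hgA hgB)]
    have hYle : Real.exp (-θ * w) * (1 - Real.exp (-2 * θ * u)) ≤ 2 * θ * u :=
      le_trans (mul_le_of_le_one_left hgu.le hew1) hguU
    have hY2 : (Real.exp (-θ * w) * (1 - Real.exp (-2 * θ * u))) ^ 2 ≤ (2 * θ * u) ^ 2 :=
      pow_le_pow_left₀ hY0 hYle 2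
    have heq : (2 * θ * u) ^ 2 = u ^ 2 / (A * B) * ((2 * θ * A) * (2 * θ * B)) := by
      linear_combination (4 * θ ^ 2) * hpAB.symm
    have hstep : u ^ 2 / (A * B) * ((2 * θ * A) * (2 * θ * B)) ≤
        u ^ 2 / (A * B) * ((Real.exp (2 * θ * A) * (1 - Real.exp (-2 * θ * A))) *
          (Real.exp (2 * θ * B) * (1 - Real.exp (-2 * θ * B)))) := by
      apply mul_le_mul_of_nonneg_left _ hp0
      apply mul_le_mul hXA hXB hθB.le (by positivity)
    calc (Real.exp (-θ * w) * (1 - Real.exp (-2 * θ * u))) ^ 2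
        ≤ u ^ 2 / (A * B) * ((2 * θ * A) * (2 * θ * B)) := by linarith [heq ▸ hY2]
      _ ≤ u ^ 2 / (A * B) * ((Real.exp (2 * θ * A) * (1 - Real.exp (-2 * θ * A))) *
          (Real.exp (2 * θ * B) * (1 - Real.exp (-2 * θ * B)))) := hstep
      _ = u ^ 2 / (A * B) * (Real.exp (2 * θ * A) * Real.exp (2 * θ * B)) *
          ((1 - Real.exp (-2 * θ * A)) * (1 - Real.exp (-2 * θ * B))) := by ring
  -- lower bound
  have hlb : u ^ 2 / (A * B) * Real.exp (-2 * θ * (w + 2 * u)) ≤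
      (Real.exp (-θ * w) * (1 - Real.exp (-2 * θ * u))) ^ 2 /
      ((1 - Real.exp (-2 * θ * A)) * (1 - Real.exp (-2 * θ * B))) := by
    rw [le_div_iff₀ (mul_pos hgA hgB)]
    have e1 : (Real.exp (-θ * w) * Real.exp (-2 * θ * u)) ^ 2 =
        Real.exp (-2 * θ * (w + 2 * u)) := by
      rw [← Real.exp_add, sq, ← Real.exp_add]
      congr 1
      ring
    have hprod : (2 * θ * u * (Real.exp (-θ * w) * Real.exp (-2 * θ * u))) ^ 2 =
        (2 * θ * u) ^ 2 * Real.exp (-2 * θ * (w + 2 * u)) := by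
      rw [mul_pow, e1]
    have hYge : 2 * θ * u * (Real.exp (-θ * w) * Real.exp (-2 * θ * u)) ≤
        Real.exp (-θ * w) * (1 - Real.exp (-2 * θ * u)) := by
      calc 2 * θ * u * (Real.exp (-θ * w) * Real.exp (-2 * θ * u))
          = Real.exp (-θ * w) * (2 * θ * u * Real.exp (-2 * θ * u)) := by ring
        _ ≤ Real.exp (-θ * w) * (1 - Real.exp (-2 * θ * u)) :=
            mul_le_mul_of_nonneg_left hguL hewpos.le
    have hY2ge : (2 * θ * u) ^ 2 * Real.exp (-2 * θ * (w + 2 * u)) ≤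
        (Real.exp (-θ * w) * (1 - Real.exp (-2 * θ * u))) ^ 2 := by
      rw [← hprod]
      have h0 : 0 ≤ 2 * θ * u * (Real.exp (-θ * w) * Real.exp (-2 * θ * u)) := by positivity
      exact pow_le_pow_left₀ h0 hYge 2
    have heq : (2 * θ * u) ^ 2 = u ^ 2 / (A * B) * ((2 * θ * A) * (2 * θ * B)) := by
      linear_combination (4 * θ ^ 2) * hpAB.symm
    have hgprod : (1 - Real.exp (-2 * θ * A)) * (1 - Real.exp (-2 * θ * B)) ≤
        (2 * θ * A) * (2 * θ * B) := by
      apply mul_le_mul hgAU hgBU hgB.le hθA.le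
    calc u ^ 2 / (A * B) * Real.exp (-2 * θ * (w + 2 * u)) *
          ((1 - Real.exp (-2 * θ * A)) * (1 - Real.exp (-2 * θ * B)))
        ≤ u ^ 2 / (A * B) * Real.exp (-2 * θ * (w + 2 * u)) * ((2 * θ * A) * (2 * θ * B)) := by
          apply mul_le_mul_of_nonneg_left hgprod (by positivity)
      _ = (2 * θ * u) ^ 2 * Real.exp (-2 * θ * (w + 2 * u)) := by
          rw [heq]; ring
      _ ≤ (Real.exp (-θ * w) * (1 - Real.exp (-2 * θ * u))) ^ 2 := hY2ge
  -- assemble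
  rw [abs_sub_le_iff]
  have hXsum : Real.exp (2 * θ * A) * Real.exp (2 * θ * B) = Real.exp (2 * θ * A + 2 * θ * B) :=
    (Real.exp_add _ _).symm
  have hX4 : Real.exp (2 * θ * A + 2 * θ * B) ≤ Real.exp (4 * θ) := by
    apply Real.exp_le_exp.mpr
    nlinarith [mul_le_mul_of_nonneg_left (hAS.trans hS1) hθ.le,
      mul_le_mul_of_nonneg_left (hBS.trans hS1) hθ.le]
  have hXge1 : 1 ≤ Real.exp (2 * θ * A + 2 * θ * B) := Real.one_le_exp (by nlinarith)
  have hXm1 : Real.exp (2 * θ * A + 2 * θ * B) - 1 ≤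
      (2 * θ * A + 2 * θ * B) * Real.exp (2 * θ * A + 2 * θ * B) := by
    have h1 := Real.add_one_le_exp (-(2 * θ * A + 2 * θ * B))
    have h2 : Real.exp (2 * θ * A + 2 * θ * B) * Real.exp (-(2 * θ * A + 2 * θ * B)) = 1 :=
      OU_exp_prod_one _
    have h3 := mul_le_mul_of_nonneg_right h1 (Real.exp_pos (2 * θ * A + 2 * θ * B)).le
    nlinarith [h3, h2]
  have he4 : 1 ≤ Real.exp (4 * θ) := Real.one_le_exp (by positivity)
  constructor
  · -- E - p ≤ bound
    have h1 : (Real.exp (-θ * w) * (1 - Real.exp (-2 * θ * u))) ^ 2 /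
        ((1 - Real.exp (-2 * θ * A)) * (1 - Real.exp (-2 * θ * B))) - u ^ 2 / (A * B) ≤
        Real.exp (2 * θ * A + 2 * θ * B) - 1 := by
      rw [hXsum] at hub
      have aux : 0 ≤ (1 - u ^ 2 / (A * B)) * (Real.exp (2 * θ * A + 2 * θ * B) - 1) :=
        mul_nonneg (by linarith) (by linarith)
      linarith [aux, hub]
    have hab : 2 * θ * A + 2 * θ * B ≤ 4 * θ * S := by
      nlinarith [mul_le_mul_of_nonneg_left hAS hθ.le, mul_le_mul_of_nonneg_left hBS hθ.le]
    have h2 : (2 * θ * A + 2 * θ * B) * Real.exp (2 * θ * A + 2 * θ * B) ≤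
        4 * θ * S * Real.exp (4 * θ) :=
      mul_le_mul hab hX4 (Real.exp_pos _).le (by positivity)
    have h3 : 0 ≤ θ * Real.exp (4 * θ) * S := by positivity
    linarith
  · -- p - E ≤ bound
    have hYe : 1 - Real.exp (-2 * θ * (w + 2 * u)) ≤ 2 * θ * (w + 2 * u) := OU_g_ub θ _
    have h1 : u ^ 2 / (A * B) - (Real.exp (-θ * w) * (1 - Real.exp (-2 * θ * u))) ^ 2 /
        ((1 - Real.exp (-2 * θ * A)) * (1 - Real.exp (-2 * θ * B))) ≤
        1 - Real.exp (-2 * θ * (w + 2 * u)) := by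
      have hee : Real.exp (-2 * θ * (w + 2 * u)) ≤ 1 := by
        apply Real.exp_le_one_iff.mpr
        have : 0 ≤ 2 * θ * (w + 2 * u) := by positivity
        linarith
      have aux : 0 ≤ (1 - u ^ 2 / (A * B)) * (1 - Real.exp (-2 * θ * (w + 2 * u))) :=
        mul_nonneg (by linarith) (by linarith)
      linarith [aux, hlb]
    have h2 : 2 * θ * (w + 2 * u) ≤ 6 * θ * S := by
      nlinarith [mul_le_mul_of_nonneg_left hwS hθ.le, mul_le_mul_of_nonneg_left huS hθ.le]
    have h3 : 0 ≤ 6 * θ * S * (Real.exp (4 * θ) - 1) :=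
      mul_nonneg (by positivity) (by linarith)
    linarith [h3]


lemma OU_integrable_sq_exp {b : ℝ} (hb : 0 < b) :
    Integrable (fun x : ℝ => x ^ 2 * Real.exp (-b * x ^ 2)) := by
  have h := integrable_rpow_mul_exp_neg_mul_sq hb (show (-1 : ℝ) < 2 by norm_num)
  have heq : (fun x : ℝ => x ^ (2 : ℝ) * Real.exp (-b * x ^ 2)) =
      fun x : ℝ => x ^ 2 * Real.exp (-b * x ^ 2) := by
    funext x
    rw [show ((2 : ℝ) = ((2 : ℕ) : ℝ)) by norm_num, Real.rpow_natCast]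
  rwa [heq] at h

lemma OU_integral_sq_exp {b : ℝ} (hb : 0 < b) :
    ∫ x : ℝ, x ^ 2 * Real.exp (-b * x ^ 2) = Real.sqrt (π / b) / (2 * b) := by
  have hint1 : Integrable (fun x : ℝ => Real.exp (-b * x ^ 2)) := integrable_exp_neg_mul_sq hb
  have hint2 : Integrable (fun x : ℝ => x ^ 2 * Real.exp (-b * x ^ 2)) := OU_integrable_sq_exp hb
  have hF : ∀ x : ℝ, HasDerivAt (fun y : ℝ => y * Real.exp (-b * y ^ 2))
      (Real.exp (-b * x ^ 2) - 2 * b * (x ^ 2 * Real.exp (-b * x ^ 2))) x := by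
    intro x
    have h1 : HasDerivAt (fun y : ℝ => -b * y ^ 2) (-b * (2 * x)) x := by
      simpa using (hasDerivAt_pow 2 x).const_mul (-b)
    have h2 := h1.exp
    have h3 : HasDerivAt (fun y : ℝ => y * Real.exp (-b * y ^ 2))
        (1 * Real.exp (-b * x ^ 2) + id x * (Real.exp (-b * x ^ 2) * (-b * (2 * x)))) x :=
      (hasDerivAt_id x).fun_mul h2
    convert h3 using 1
    simp only [id]
    ring
  have f'int : Integrable (fun x : ℝ =>
      Real.exp (-b * x ^ 2) - 2 * b * (x ^ 2 * Real.exp (-b * x ^ 2))) :=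
    hint1.sub (hint2.const_mul (2 * b))
  have ht : Tendsto (fun x : ℝ => x * Real.exp (-b * x ^ 2)) atTop (nhds 0) := by
    have h := rpow_mul_exp_neg_mul_sq_isLittleO_exp_neg hb 1
    have h2 : Tendsto (fun x : ℝ => Real.exp (-(1 / 2) * x)) atTop (nhds 0) := by
      have hlin : Tendsto (fun x : ℝ => -(1 / 2) * x) atTop atBot := by
        apply Filter.Tendsto.const_mul_atTop_of_neg (by norm_num : (-(1 / 2) : ℝ) < 0) tendsto_id
      exact Real.tendsto_exp_atBot.comp hlin
    have h3 := h.trans_tendsto h2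
    refine h3.congr fun x => ?_
    rw [Real.rpow_one]
  have htb : Tendsto (fun x : ℝ => x * Real.exp (-b * x ^ 2)) atBot (nhds 0) := by
    have h : Tendsto ((fun x : ℝ => -(x * Real.exp (-b * x ^ 2))) ∘ (fun x : ℝ => -x))
        atBot (nhds (-0)) := (ht.neg).comp tendsto_neg_atBot_atTop
    rw [neg_zero] at h
    refine h.congr fun x => ?_
    simp only [Function.comp]
    rw [neg_sq]
    ring
  have hIoi : ∫ x in Ioi (0 : ℝ),
      (Real.exp (-b * x ^ 2) - 2 * b * (x ^ 2 * Real.exp (-b * x ^ 2))) =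
      0 - (0 * Real.exp (-b * 0 ^ 2)) := by
    exact integral_Ioi_of_hasDerivAt_of_tendsto (hF 0).continuousAt.continuousWithinAt
      (fun x _ => hF x) f'int.integrableOn ht
  have hIic : ∫ x in Iic (0 : ℝ),
      (Real.exp (-b * x ^ 2) - 2 * b * (x ^ 2 * Real.exp (-b * x ^ 2))) =
      (0 * Real.exp (-b * 0 ^ 2)) - 0 := by
    exact integral_Iic_of_hasDerivAt_of_tendsto (hF 0).continuousAt.continuousWithinAt
      (fun x _ => hF x) f'int.integrableOn htb
  have htot : ∫ x : ℝ,
      (Real.exp (-b * x ^ 2) - 2 * b * (x ^ 2 * Real.exp (-b * x ^ 2))) = 0 := by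
    rw [← intervalIntegral.integral_Iic_add_Ioi (b := (0:ℝ)) f'int.integrableOn f'int.integrableOn, hIoi, hIic]
    simp
  rw [integral_sub hint1 (hint2.const_mul (2 * b)), integral_const_mul, integral_gaussian] at htot
  have h2b : (2 * b) ≠ 0 := by positivity
  field_simp at htot ⊢
  linarith

lemma OU_gauss_smul_fun (v : ℝ≥0) (hv : v ≠ 0) :
    (fun x : ℝ => (gaussianPDFReal 0 v x).toNNReal • x ^ 2) =
      fun x : ℝ => (Real.sqrt (2 * π * v))⁻¹ *
        (x ^ 2 * Real.exp (-(2 * (v : ℝ))⁻¹ * x ^ 2)) := by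
  funext x
  rw [NNReal.smul_def, Real.coe_toNNReal _ (gaussianPDFReal_nonneg 0 v x), gaussianPDFReal]
  rw [show -(x - 0) ^ 2 / (2 * (v : ℝ)) = -(2 * (v : ℝ))⁻¹ * x ^ 2 by ring]
  rw [smul_eq_mul]
  ring

lemma OU_gauss_sq_integrable (v : ℝ≥0) :
    Integrable (fun x : ℝ => x ^ 2) (gaussianReal 0 v) := by
  by_cases hv : v = 0
  · rw [hv, gaussianReal_zero_var]
    refine ⟨(measurable_id.pow_const 2).aestronglyMeasurable, ?_⟩
    rw [HasFiniteIntegral, lintegral_dirac]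
    simp
  · have hvpos : (0 : ℝ) < (v : ℝ) := by
      exact_mod_cast lt_of_le_of_ne (zero_le : (0:ℝ≥0) ≤ v) (Ne.symm hv)
    have hb : (0 : ℝ) < (2 * (v : ℝ))⁻¹ := by positivity
    rw [gaussianReal_of_var_ne_zero _ hv, gaussianPDF_def]
    have hmeas : Measurable fun x : ℝ => (gaussianPDFReal 0 v x).toNNReal :=
      (measurable_gaussianPDFReal 0 v).real_toNNReal
    have hrw : (fun x : ℝ => ENNReal.ofReal (gaussianPDFReal 0 v x)) =
        fun x : ℝ => ((gaussianPDFReal 0 v x).toNNReal : ℝ≥0∞) := rfl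
    rw [hrw, integrable_withDensity_iff_integrable_smul hmeas]
    rw [OU_gauss_smul_fun v hv]
    exact (OU_integrable_sq_exp hb).const_mul _

lemma OU_gauss_sq_integral (v : ℝ≥0) :
    ∫ x : ℝ, x ^ 2 ∂(gaussianReal 0 v) = (v : ℝ) := by
  by_cases hv : v = 0
  · rw [hv, gaussianReal_zero_var, integral_dirac]
    norm_num
  · have hvpos : (0 : ℝ) < (v : ℝ) := by
      exact_mod_cast lt_of_le_of_ne (zero_le : (0:ℝ≥0) ≤ v) (Ne.symm hv)
    have hb : (0 : ℝ) < (2 * (v : ℝ))⁻¹ := by positivity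
    rw [gaussianReal_of_var_ne_zero _ hv, gaussianPDF_def]
    have hmeas : Measurable fun x : ℝ => (gaussianPDFReal 0 v x).toNNReal :=
      (measurable_gaussianPDFReal 0 v).real_toNNReal
    have hrw : (fun x : ℝ => ENNReal.ofReal (gaussianPDFReal 0 v x)) =
        fun x : ℝ => ((gaussianPDFReal 0 v x).toNNReal : ℝ≥0∞) := rfl
    rw [hrw, integral_withDensity_eq_integral_smul hmeas]
    rw [OU_gauss_smul_fun v hv, integral_const_mul, OU_integral_sq_exp hb]
    have h1 : π / ((2 * (v : ℝ))⁻¹) = 2 * π * (v : ℝ) := by field_simp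
    rw [h1]
    have h2 : Real.sqrt (2 * π * (v : ℝ)) ≠ 0 := by
      have : (0 : ℝ) < 2 * π * (v : ℝ) := by positivity
      positivity
    field_simp

lemma OU_map_sq {Ω : Type*} [MeasurableSpace Ω] (P : Measure Ω) (g : Ω → ℝ) (v : ℝ)
    (hv : 0 ≤ v) (h : Measure.map g P = gaussianReal 0 v.toNNReal) :
    AEMeasurable g P ∧ Integrable (fun ω => (g ω) ^ 2) P ∧ ∫ ω, (g ω) ^ 2 ∂P = v := by
  have hg : AEMeasurable g P := by
    by_contra hc
    rw [Measure.map_of_not_aemeasurable hc] at h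
    have h1 : (gaussianReal 0 v.toNNReal) Set.univ = 1 := measure_univ
    rw [← h] at h1
    simp at h1
  have hsm : AEStronglyMeasurable (fun x : ℝ => x ^ 2) (Measure.map g P) :=
    (measurable_id.pow_const 2).aestronglyMeasurable
  refine ⟨hg, ?_, ?_⟩
  · have hi : Integrable (fun x : ℝ => x ^ 2) (Measure.map g P) := by
      rw [h]; exact OU_gauss_sq_integrable _
    exact (integrable_map_measure hsm hg).mp hi
  · have hI : ∫ x, x ^ 2 ∂(Measure.map g P) = v := by
      rw [h, OU_gauss_sq_integral, Real.coe_toNNReal _ hv]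
    rw [integral_map hg hsm] at hI
    exact hI



lemma OU_exp_split (θ u v : ℝ) :
    Real.exp (-θ * (u - v)) = Real.exp (-θ * u) / Real.exp (-θ * v) := by
  rw [show -θ * (u - v) = -θ * u - -θ * v by ring, Real.exp_sub]

lemma OU_exp2_split (θ u v : ℝ) :
    Real.exp (-2 * θ * (u - v)) = (Real.exp (-θ * u) / Real.exp (-θ * v)) ^ 2 := by
  rw [← OU_exp_split, sq, ← Real.exp_add]
  congr 1
  ring

lemma OU_id_disj (θ σ a b c d : ℝ) :
    σ * Real.exp (-θ * (d - b)) - Real.exp (-θ * (d - c)) * (σ * Real.exp (-θ * (c - b)))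
      - Real.exp (-θ * (b - a)) * (σ * Real.exp (-θ * (d - a)))
      + Real.exp (-θ * (b - a)) * Real.exp (-θ * (d - c)) * (σ * Real.exp (-θ * (c - a)))
      = 0 := by
  simp only [OU_exp_split θ]
  field_simp
  ring

lemma OU_id_mid (θ σ a b c d : ℝ) :
    σ * Real.exp (-θ * (d - b)) - Real.exp (-θ * (d - c)) * (σ * Real.exp (-θ * (b - c)))
      - Real.exp (-θ * (b - a)) * (σ * Real.exp (-θ * (d - a)))
      + Real.exp (-θ * (b - a)) * Real.exp (-θ * (d - c)) * (σ * Real.exp (-θ * (c - a)))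
      = σ * (Real.exp (-θ * (d - b)) * (1 - Real.exp (-2 * θ * (b - c)))) := by
  simp only [OU_exp_split θ, OU_exp2_split θ]
  field_simp
  ring

lemma OU_id_right (θ σ a b c d : ℝ) :
    σ * Real.exp (-θ * (b - d)) - Real.exp (-θ * (d - c)) * (σ * Real.exp (-θ * (b - c)))
      - Real.exp (-θ * (b - a)) * (σ * Real.exp (-θ * (d - a)))
      + Real.exp (-θ * (b - a)) * Real.exp (-θ * (d - c)) * (σ * Real.exp (-θ * (c - a)))
      = σ * (Real.exp (-θ * (b - d)) * (1 - Real.exp (-2 * θ * (d - c)))) := by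
  simp only [OU_exp_split θ, OU_exp2_split θ]
  field_simp
  ring

lemma OU_habs_le {x y : ℝ} (h : x ≤ y) : |x - y| = y - x := by
  rw [abs_sub_comm, abs_of_nonneg (sub_nonneg.mpr h)]

lemma OU_habs_ge {x y : ℝ} (h : y ≤ x) : |x - y| = x - y :=
  abs_of_nonneg (sub_nonneg.mpr h)

lemma OU_sq_conv (σ gA gB Y c1 c2 : ℝ) (hσ : 0 < σ) (hgA : 0 < gA) (hgB : 0 < gB)
    (h1 : c1 ^ 2 = σ * gA) (h2 : c2 ^ 2 = σ * gB) :
    ((c1 * c2)⁻¹ * (σ * Y)) ^ 2 = Y ^ 2 / (gA * gB) := by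
  have hp1 : (0 : ℝ) < c1 ^ 2 := by rw [h1]; exact mul_pos hσ hgA
  have hp2 : (0 : ℝ) < c2 ^ 2 := by rw [h2]; exact mul_pos hσ hgB
  have hc1 : c1 ≠ 0 := fun h => by rw [h] at hp1; simp at hp1
  have hc2 : c2 ≠ 0 := fun h => by rw [h] at hp2; simp at hp2
  field_simp
  rw [h1, h2]
  ring

lemma OU_cov {Ω : Type*} [MeasurableSpace Ω] (P : Measure Ω) [IsProbabilityMeasure P]
    (θ₀ σ₀sq : ℝ) (hθ : 0 < θ₀) (hσ : 0 < σ₀sq) (Z : ℝ → Ω → ℝ)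
    (hGauss : ∀ (m : ℕ) (t : Fin m → ℝ) (a : Fin m → ℝ),
      Measure.map (fun ω => ∑ i, a i * Z (t i) ω) P =
        gaussianReal 0
          (∑ i, ∑ j, a i * a j * (σ₀sq * Real.exp (-θ₀ * |t i - t j|))).toNNReal)
    (x y : ℝ) :
    Integrable (fun ω => Z x ω * Z y ω) P ∧
      ∫ ω, Z x ω * Z y ω ∂P = σ₀sq * Real.exp (-θ₀ * |x - y|) := by
  have hE0 : 0 < Real.exp (-θ₀ * |x - y|) := Real.exp_pos _
  have hE1 : Real.exp (-θ₀ * |x - y|) ≤ 1 := by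
    apply Real.exp_le_one_iff.mpr
    have : 0 ≤ θ₀ * |x - y| := mul_nonneg hθ.le (abs_nonneg _)
    linarith
  have hplus : Measure.map (fun ω => Z x ω + Z y ω) P =
      gaussianReal 0 (2 * σ₀sq * (1 + Real.exp (-θ₀ * |x - y|))).toNNReal := by
    have h := hGauss 2 ![x, y] ![1, 1]
    have hfun : (fun ω => ∑ i : Fin 2, ![(1 : ℝ), 1] i * Z (![x, y] i) ω) =
        fun ω => Z x ω + Z y ω := by
      funext ω; simp [Fin.sum_univ_two]
    have hvar : (∑ i : Fin 2, ∑ j : Fin 2, ![(1 : ℝ), 1] i * ![(1 : ℝ), 1] j *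
        (σ₀sq * Real.exp (-θ₀ * |![x, y] i - ![x, y] j|))) =
        2 * σ₀sq * (1 + Real.exp (-θ₀ * |x - y|)) := by
      simp [Fin.sum_univ_two, abs_sub_comm y x]
      ring
    rw [hfun, hvar] at h
    exact h
  have hminus : Measure.map (fun ω => Z x ω - Z y ω) P =
      gaussianReal 0 (2 * σ₀sq * (1 - Real.exp (-θ₀ * |x - y|))).toNNReal := by
    have h := hGauss 2 ![x, y] ![1, -1]
    have hfun : (fun ω => ∑ i : Fin 2, ![(1 : ℝ), -1] i * Z (![x, y] i) ω) =
        fun ω => Z x ω - Z y ω := by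
      funext ω; simp [Fin.sum_univ_two]; ring
    have hvar : (∑ i : Fin 2, ∑ j : Fin 2, ![(1 : ℝ), -1] i * ![(1 : ℝ), -1] j *
        (σ₀sq * Real.exp (-θ₀ * |![x, y] i - ![x, y] j|))) =
        2 * σ₀sq * (1 - Real.exp (-θ₀ * |x - y|)) := by
      simp [Fin.sum_univ_two, abs_sub_comm y x]
      ring
    rw [hfun, hvar] at h
    exact h
  have h1 := OU_map_sq P _ _ (by nlinarith) hplus
  have h2 := OU_map_sq P _ _ (by nlinarith) hminus
  have hfeq : (fun ω => Z x ω * Z y ω) =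
      fun ω => ((Z x ω + Z y ω) ^ 2 - (Z x ω - Z y ω) ^ 2) / 4 := by
    funext ω; ring
  constructor
  · rw [hfeq]
    exact (h1.2.1.sub h2.2.1).div_const 4
  · rw [hfeq]
    rw [integral_div, integral_sub h1.2.1 h2.2.1, h1.2.2, h2.2.2]
    ring

lemma OU_integral_formula {Ω : Type*} [MeasurableSpace Ω] (P : Measure Ω)
    (θ₀ σ₀sq : ℝ) (Z : ℝ → Ω → ℝ)
    (hcov : ∀ x y : ℝ, Integrable (fun ω => Z x ω * Z y ω) P ∧
      ∫ ω, Z x ω * Z y ω ∂P = σ₀sq * Real.exp (-θ₀ * |x - y|))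
    (s : ℕ → ℝ) (i j k l : ℕ) :
    ∫ ω, OUInnov θ₀ σ₀sq Z s i j ω * OUInnov θ₀ σ₀sq Z s k l ω ∂P =
      (Real.sqrt (σ₀sq * (1 - Real.exp (-2 * θ₀ * (s j - s i)))) *
        Real.sqrt (σ₀sq * (1 - Real.exp (-2 * θ₀ * (s l - s k)))))⁻¹ *
      (σ₀sq * Real.exp (-θ₀ * |s j - s l|)
        - Real.exp (-θ₀ * (s l - s k)) * (σ₀sq * Real.exp (-θ₀ * |s j - s k|))
        - Real.exp (-θ₀ * (s j - s i)) * (σ₀sq * Real.exp (-θ₀ * |s i - s l|))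
        + Real.exp (-θ₀ * (s j - s i)) * Real.exp (-θ₀ * (s l - s k)) *
            (σ₀sq * Real.exp (-θ₀ * |s i - s k|))) := by
  have hfe : (fun ω => OUInnov θ₀ σ₀sq Z s i j ω * OUInnov θ₀ σ₀sq Z s k l ω) =
      fun ω => (Real.sqrt (σ₀sq * (1 - Real.exp (-2 * θ₀ * (s j - s i)))) *
        Real.sqrt (σ₀sq * (1 - Real.exp (-2 * θ₀ * (s l - s k)))))⁻¹ *
        (Z (s j) ω * Z (s l) ω
          - Real.exp (-θ₀ * (s l - s k)) * (Z (s j) ω * Z (s k) ω)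
          - Real.exp (-θ₀ * (s j - s i)) * (Z (s i) ω * Z (s l) ω)
          + Real.exp (-θ₀ * (s j - s i)) * Real.exp (-θ₀ * (s l - s k)) *
              (Z (s i) ω * Z (s k) ω)) := by
    funext ω
    simp only [OUInnov]
    rw [div_mul_div_comm, div_eq_inv_mul]
    ring
  rw [hfe, integral_const_mul]
  have i1 := (hcov (s j) (s l)).1
  have i2 := ((hcov (s j) (s k)).1).const_mul (Real.exp (-θ₀ * (s l - s k)))
  have i3 := ((hcov (s i) (s l)).1).const_mul (Real.exp (-θ₀ * (s j - s i)))
  have i4 := ((hcov (s i) (s k)).1).const_mul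
    (Real.exp (-θ₀ * (s j - s i)) * Real.exp (-θ₀ * (s l - s k)))
  have i12 : Integrable (fun ω => Z (s j) ω * Z (s l) ω
      - Real.exp (-θ₀ * (s l - s k)) * (Z (s j) ω * Z (s k) ω)) P := i1.sub i2
  have i123 : Integrable (fun ω => Z (s j) ω * Z (s l) ω
      - Real.exp (-θ₀ * (s l - s k)) * (Z (s j) ω * Z (s k) ω)
      - Real.exp (-θ₀ * (s j - s i)) * (Z (s i) ω * Z (s l) ω)) P := i12.sub i3
  rw [integral_add i123 i4, integral_sub i12 i3, integral_sub i1 i2,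
    integral_const_mul, integral_const_mul, integral_const_mul,
    (hcov (s j) (s l)).2, (hcov (s j) (s k)).2, (hcov (s i) (s l)).2, (hcov (s i) (s k)).2]

end OUhelpers

/-- Covariance expansion (Lemma 2): uniformly over configurations of ordered
points in `[0,1]` and index tuples `i ≤ k`, `i < j`, `k < ℓ` with gaps
`j − i ≤ K`, `ℓ − k ≤ K`, one has
`Cov(W_{i,j}, W_{k,ℓ})² = b_{i,j,k,ℓ} + O(s_{max(i,j,k,ℓ)} − s_{min(i,j,k,ℓ)})`. -/

theorem OU_innovation_covariance_expansion
    {Ω : Type*} [MeasurableSpace Ω] (P : Measure Ω) [IsProbabilityMeasure P]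
    (θ₀ σ₀sq : ℝ) (hθ : 0 < θ₀) (hσ : 0 < σ₀sq) (K : ℕ) (hK : 1 ≤ K)
    (Z : ℝ → Ω → ℝ)
    (hGauss : ∀ (m : ℕ) (t : Fin m → ℝ) (a : Fin m → ℝ),
      Measure.map (fun ω => ∑ i, a i * Z (t i) ω) P =
        gaussianReal 0
          (∑ i, ∑ j, a i * a j * (σ₀sq * Real.exp (-θ₀ * |t i - t j|))).toNNReal) :
    ∃ Cst : ℝ, ∀ (n : ℕ) (s : ℕ → ℝ),
      0 ≤ s 1 → s n ≤ 1 →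
      (∀ p q : ℕ, 1 ≤ p → p < q → q ≤ n → s p < s q) →
      ∀ i j k l : ℕ, 1 ≤ i → i ≤ k → i < j → k < l → j ≤ n → l ≤ n →
        j - i ≤ K → l - k ≤ K →
        |(∫ ω, OUInnov θ₀ σ₀sq Z s i j ω * OUInnov θ₀ σ₀sq Z s k l ω ∂P) ^ 2
            - bCoef s i j k l|
          ≤ Cst * (s (max j l) - s i) := by
  have hcov := OU_cov P θ₀ σ₀sq hθ hσ Z hGauss
  refine ⟨6 * θ₀ * Real.exp (4 * θ₀), ?_⟩
  intro n s hs0 hsn hs i j k l hi hik hij hkl hjn hln _ _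
  have h1j : 1 ≤ j := le_trans hi hij.le
  have h1k : 1 ≤ k := le_trans hi hik
  have h1l : 1 ≤ l := le_trans h1k hkl.le
  have hin : i ≤ n := le_trans hij.le hjn
  have hkn : k ≤ n := le_trans hkl.le hln
  have hmono : ∀ p q : ℕ, 1 ≤ p → p ≤ q → q ≤ n → s p ≤ s q := by
    intro p q h1 h2 h3
    rcases eq_or_lt_of_le h2 with h | h
    · exact le_of_eq (congrArg s h)
    · exact (hs p q h1 h h3).le
  have hab : s i < s j := hs i j hi hij hjn
  have hcd : s k < s l := hs k l h1k hkl hln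
  have hac : s i ≤ s k := hmono i k hi hik hkn
  have ha0 : 0 ≤ s i := le_trans hs0 (hmono 1 i le_rfl hi hin)
  have hb1 : s j ≤ 1 := le_trans (hmono j n h1j hjn le_rfl) hsn
  have hd1 : s l ≤ 1 := le_trans (hmono l n h1l hln le_rfl) hsn
  have hgA : 0 < 1 - Real.exp (-2 * θ₀ * (s j - s i)) := by
    have : Real.exp (-2 * θ₀ * (s j - s i)) < 1 := Real.exp_lt_one_iff.mpr (by nlinarith)
    linarith
  have hgB : 0 < 1 - Real.exp (-2 * θ₀ * (s l - s k)) := by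
    have : Real.exp (-2 * θ₀ * (s l - s k)) < 1 := Real.exp_lt_one_iff.mpr (by nlinarith)
    linarith
  have hc1sq : (Real.sqrt (σ₀sq * (1 - Real.exp (-2 * θ₀ * (s j - s i))))) ^ 2 =
      σ₀sq * (1 - Real.exp (-2 * θ₀ * (s j - s i))) :=
    Real.sq_sqrt (mul_nonneg hσ.le hgA.le)
  have hc2sq : (Real.sqrt (σ₀sq * (1 - Real.exp (-2 * θ₀ * (s l - s k))))) ^ 2 =
      σ₀sq * (1 - Real.exp (-2 * θ₀ * (s l - s k))) :=
    Real.sq_sqrt (mul_nonneg hσ.le hgB.le)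
  have hspan : s i < s (max j l) :=
    hs i (max j l) hi (lt_of_lt_of_le hij (le_max_left j l)) (max_le hjn hln)
  rw [OU_integral_formula P θ₀ σ₀sq Z hcov s i j k l]
  rcases le_or_gt j k with hjk | hkj
  · -- disjoint case : covariance is exactly 0
    have hbc : s j ≤ s k := hmono j k h1j hjk hkn
    rw [OU_habs_le (le_trans hbc hcd.le), OU_habs_le hbc,
      OU_habs_le (le_trans hac hcd.le), OU_habs_le hac,
      OU_id_disj θ₀ σ₀sq (s i) (s j) (s k) (s l), mul_zero]
    simp only [bCoef, if_pos hik, if_pos hjk]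
    rw [sub_zero]
    norm_num
    apply mul_nonneg (by positivity)
    linarith
  · rcases le_or_gt j l with hjl | hlj
    · -- middle case
      have hcb : s k < s j := hs k j h1k hkj hjn
      have hbd : s j ≤ s l := hmono j l h1j hjl hln
      rw [OU_habs_le hbd, OU_habs_ge hcb.le,
        OU_habs_le (le_trans hac hcd.le), OU_habs_le hac,
        OU_id_mid θ₀ σ₀sq (s i) (s j) (s k) (s l),
        OU_sq_conv σ₀sq _ _ _ _ _ hσ hgA hgB hc1sq hc2sq]
      simp only [bCoef, if_pos hik, if_neg (not_le.mpr hkj), if_pos hjl]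
      rw [max_eq_right hjl]
      exact OU_est hθ (by linarith) (by linarith) (by linarith) (by linarith) (by linarith)
        (by linarith) (by linarith) (by linarith) (by linarith) (by linarith) (by linarith)
    · -- right case
      have hcb : s k < s j := hs k j h1k (lt_trans hkl hlj) hjn
      have hdb : s l ≤ s j := (hs l j h1l hlj hjn).le
      rw [OU_habs_ge hdb, OU_habs_ge hcb.le,
        OU_habs_le (le_trans hac hcd.le), OU_habs_le hac,
        OU_id_right θ₀ σ₀sq (s i) (s j) (s k) (s l),
        OU_sq_conv σ₀sq _ _ _ _ _ hσ hgA hgB hc1sq hc2sq]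
      simp only [bCoef, if_pos hik, if_neg (not_le.mpr hkj), if_neg (not_le.mpr hlj)]
      rw [max_eq_left hlj.le]
      have hBne : s l - s k ≠ 0 := ne_of_gt (by linarith)
      rw [show (s l - s k) / (s j - s i) =
          (s l - s k) ^ 2 / ((s j - s i) * (s l - s k)) by
        rw [sq, mul_comm (s j - s i) (s l - s k), mul_div_mul_left _ _ hBne]]
      exact OU_est hθ (by linarith) (by linarith) (by linarith) (by linarith) (by linarith)
        (by linarith) le_rfl (by linarith) (by linarith) (by linarith) (by linarith)
end
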